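/- arXiv:math-ph/0511015 — 6 statements merged into one kernel-verified Lean document; each statement's English description precedes it below -/
import Mathlib

section
/- Let N ≥ 1, λ > 0, and for m ∈ ℤ^N define E₀(m) = ∑_{j=1}^N (m_j + λ(N+1-2j)/2)². Let n ∈ ℤ^N be a partition (n₁ ≥ n₂ ≥ … ≥ n_N) and let m = n + ∑_{j<k} μ_{jk}·E_{jk}, where all μ_{jk} are nonnegative integers, not all zero, and E_{jk} ∈ ℤ^N has components (E_{jk})_ℓ = δ_{jℓ} - δ_{kℓ}. Then E₀(m) - E₀(n) > 0. -/
/-- For a partition `n ∈ ℤ^N`, `λ > 0`, and `m = n + ∑_{j<k} μ_{jk} E_{jk}` with the `μ_{jk}`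
nonnegative integers, not all zero, one has `E₀(m) - E₀(n) > 0`, where
`E₀(m) = ∑_j (m_j + λ(N+1-2j)/2)²`. -/
theorem stmt_3 (N : ℕ) (hN : 1 ≤ N) (lam : ℝ) (hlam : 0 < lam)
    (n : Fin N → ℤ) (hn : ∀ j k : Fin N, j ≤ k → n k ≤ n j)
    (μ : Fin N → Fin N → ℕ) (hμ : ∃ j k : Fin N, j < k ∧ μ j k ≠ 0)
    (m : Fin N → ℤ)
    (hm : ∀ ℓ : Fin N, m ℓ = n ℓ + ∑ j : Fin N, ∑ k : Fin N,
        if j < k then (μ j k : ℤ) * ((if ℓ = j then 1 else 0) - (if ℓ = k then 1 else 0))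
        else 0) :
    (∑ j : Fin N, ((n j : ℝ) + lam * ((N : ℝ) + 1 - 2 * ((j : ℕ) + 1)) / 2) ^ 2)
      < ∑ j : Fin N, ((m j : ℝ) + lam * ((N : ℝ) + 1 - 2 * ((j : ℕ) + 1)) / 2) ^ 2 := by
  set c : Fin N → ℝ := fun j => lam * ((N : ℝ) + 1 - 2 * ((j : ℕ) + 1)) / 2 with hc
  set d : Fin N → ℝ := fun ℓ => ∑ j : Fin N, ∑ k : Fin N,
      if j < k then (μ j k : ℝ) * ((if ℓ = j then 1 else 0) - (if ℓ = k then 1 else 0)) else 0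
      with hd
  have hmd : ∀ ℓ, (m ℓ : ℝ) = (n ℓ : ℝ) + d ℓ := by
    intro ℓ
    rw [hm ℓ]
    push_cast
    simp [hd]
  have key : ∀ f : Fin N → ℝ, ∑ ℓ, d ℓ * f ℓ
      = ∑ j : Fin N, ∑ k : Fin N, if j < k then (μ j k : ℝ) * (f j - f k) else 0 := by
    intro f
    simp only [hd, Finset.sum_mul]
    rw [Finset.sum_comm]
    refine Finset.sum_congr rfl fun j _ => ?_
    rw [Finset.sum_comm]
    refine Finset.sum_congr rfl fun k _ => ?_
    by_cases h : j < k
    · have hne : j ≠ k := ne_of_lt h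
      simp only [h, if_true, sub_mul, mul_assoc, ite_mul, one_mul, zero_mul,
        mul_sub, ← Finset.mul_sum, Finset.sum_sub_distrib, Finset.sum_ite_eq',
        Finset.mem_univ, if_true]
    · simp [h]
  have hd_n : 0 ≤ ∑ ℓ, d ℓ * (n ℓ : ℝ) := by
    rw [key]
    refine Finset.sum_nonneg fun j _ => Finset.sum_nonneg fun k _ => ?_
    by_cases h : j < k
    · simp only [h, if_true]
      have h1 : (n k : ℝ) ≤ (n j : ℝ) := by exact_mod_cast hn j k h.le
      exact mul_nonneg (Nat.cast_nonneg _) (by linarith)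
    · simp [h]
  have hd_c : 0 < ∑ ℓ, d ℓ * c ℓ := by
    rw [key]
    obtain ⟨j0, k0, hjk, hμ0⟩ := hμ
    refine Finset.sum_pos' (fun j _ => Finset.sum_nonneg fun k _ => ?_)
      ⟨j0, Finset.mem_univ _, ?_⟩
    · by_cases h : j < k
      · simp only [h, if_true]
        have hlt : ((j : ℕ) : ℝ) < ((k : ℕ) : ℝ) := by exact_mod_cast h
        have hck : c k ≤ c j := by
          simp only [hc]
          nlinarith
        exact mul_nonneg (Nat.cast_nonneg _) (by linarith)
      · simp [h]
    · refine Finset.sum_pos' (fun k _ => ?_) ⟨k0, Finset.mem_univ _, ?_⟩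
      · by_cases h : j0 < k
        · simp only [h, if_true]
          have hlt : ((j0 : ℕ) : ℝ) < ((k : ℕ) : ℝ) := by exact_mod_cast h
          have hck : c k ≤ c j0 := by
            simp only [hc]
            nlinarith
          exact mul_nonneg (Nat.cast_nonneg _) (by linarith)
        · simp [h]
      · simp only [hjk, if_true]
        have hlt : ((j0 : ℕ) : ℝ) < ((k0 : ℕ) : ℝ) := by exact_mod_cast hjk
        have hck : c k0 < c j0 := by
          simp only [hc]
          nlinarith
        have hμpos : (0 : ℝ) < (μ j0 k0 : ℝ) := by
          exact_mod_cast Nat.pos_of_ne_zero hμ0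
        exact mul_pos hμpos (by linarith)
  have hd_sq : 0 ≤ ∑ ℓ, (d ℓ) ^ 2 := Finset.sum_nonneg fun _ _ => sq_nonneg _
  have expand : ∑ j : Fin N, ((m j : ℝ) + c j) ^ 2
      = ∑ j : Fin N, ((n j : ℝ) + c j) ^ 2 + ∑ ℓ, (d ℓ) ^ 2
        + 2 * (∑ ℓ, d ℓ * (n ℓ : ℝ) + ∑ ℓ, d ℓ * c ℓ) := by
    rw [mul_add, ← Finset.sum_add_distrib, Finset.mul_sum, Finset.mul_sum,
      ← Finset.sum_add_distrib, ← Finset.sum_add_distrib]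
    refine Finset.sum_congr rfl fun ℓ _ => ?_
    rw [hmd ℓ]
    ring
  calc (∑ j : Fin N, ((n j : ℝ) + c j) ^ 2)
      < ∑ j : Fin N, ((m j : ℝ) + c j) ^ 2 := by rw [expand]; linarith
end

section
/- With E₀(m) = ∑_{j=1}^N (m_j + λ(N+1-2j)/2)² and m = n + ∑_{j<k} μ_{jk} E_{jk} for integers μ_{jk}, one has E₀(m) - E₀(n) = ∑_{j=1}^N ( 2·∑_{k=j+1}^N μ_{jk}(n_j - n_k + (k-j)λ) + (∑_{k<j} μ_{kj} - ∑_{k>j} μ_{jk})² ). -/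
/-- With `E₀(m) = ∑_j (m_j + λ(N+1-2j)/2)²` and `m = n + ∑_{j<k} μ_{jk} E_{jk}` for integers
`μ_{jk}`, one has
`E₀(m) - E₀(n) = ∑_j ( 2 ∑_{k>j} μ_{jk}(n_j - n_k + (k-j)λ) + (∑_{k<j} μ_{kj} - ∑_{k>j} μ_{jk})² )`. -/
theorem stmt_4 (N : ℕ) (hN : 1 ≤ N) (lam : ℝ)
    (n : Fin N → ℤ) (μ : Fin N → Fin N → ℤ)
    (m : Fin N → ℤ)
    (hm : ∀ ℓ : Fin N, m ℓ = n ℓ + ∑ j : Fin N, ∑ k : Fin N,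
        if j < k then μ j k * ((if ℓ = j then 1 else 0) - (if ℓ = k then 1 else 0))
        else 0) :
    (∑ j : Fin N, ((m j : ℝ) + lam * ((N : ℝ) + 1 - 2 * ((j : ℕ) + 1)) / 2) ^ 2)
      - (∑ j : Fin N, ((n j : ℝ) + lam * ((N : ℝ) + 1 - 2 * ((j : ℕ) + 1)) / 2) ^ 2)
    = ∑ j : Fin N,
        (2 * (∑ k : Fin N, if j < k then
              (μ j k : ℝ) * ((n j : ℝ) - (n k : ℝ) + (((k : ℕ) : ℝ) - ((j : ℕ) : ℝ)) * lam)
            else 0)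
          + ((∑ k : Fin N, if k < j then (μ k j : ℝ) else 0)
              - (∑ k : Fin N, if j < k then (μ j k : ℝ) else 0)) ^ 2) := by
  set a : Fin N → ℝ := fun j => (n j : ℝ) + lam * ((N : ℝ) + 1 - 2 * ((j : ℕ) + 1)) / 2 with ha
  set D : Fin N → ℝ := fun j =>
    (∑ k : Fin N, if j < k then (μ j k : ℝ) else 0)
      - (∑ k : Fin N, if k < j then (μ k j : ℝ) else 0) with hD
  -- closed form for m
  have hmj : ∀ ℓ : Fin N, (m ℓ : ℝ) = (n ℓ : ℝ) + D ℓ := by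
    intro ℓ
    have hcast : (m ℓ : ℝ) = (n ℓ : ℝ) + ∑ j : Fin N, ∑ k : Fin N,
        if j < k then (μ j k : ℝ) * ((if ℓ = j then 1 else 0) - (if ℓ = k then 1 else 0))
        else 0 := by exact_mod_cast hm ℓ
    rw [hcast, hD]
    congr 1
    have h1 : ∀ j k : Fin N,
        (if j < k then (μ j k : ℝ) * ((if ℓ = j then 1 else 0) - (if ℓ = k then 1 else 0)) else 0)
        = (if ℓ = j then (if j < k then (μ j k : ℝ) else 0) else 0)
          - (if ℓ = k then (if j < k then (μ j k : ℝ) else 0) else 0) := by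
      intro j k
      by_cases hjk : j < k
      · have hne : j ≠ k := ne_of_lt hjk
        by_cases h1 : ℓ = j <;> by_cases h2 : ℓ = k <;>
          simp [hjk, h1, h2, hne, hne.symm]
      · simp [hjk]
    simp_rw [h1, Finset.sum_sub_distrib]
    congr 1
    · have hpull : ∀ j : Fin N, (∑ k : Fin N,
          (if ℓ = j then (if j < k then (μ j k : ℝ) else 0) else 0))
          = (if ℓ = j then (∑ k : Fin N, if j < k then (μ j k : ℝ) else 0) else 0) := by
        intro j; by_cases hc : ℓ = j <;> simp [hc]
      simp_rw [hpull, Finset.sum_ite_eq, Finset.mem_univ, if_true]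
    · rw [Finset.sum_comm]
      have hpull : ∀ k : Fin N, (∑ j : Fin N,
          (if ℓ = k then (if j < k then (μ j k : ℝ) else 0) else 0))
          = (if ℓ = k then (∑ j : Fin N, if j < k then (μ j k : ℝ) else 0) else 0) := by
        intro k; by_cases hc : ℓ = k <;> simp [hc]
      simp_rw [hpull, Finset.sum_ite_eq, Finset.mem_univ, if_true]
  -- LHS as a single sum
  have hL : (∑ j : Fin N, ((m j : ℝ) + lam * ((N : ℝ) + 1 - 2 * ((j : ℕ) + 1)) / 2) ^ 2)
      - (∑ j : Fin N, ((n j : ℝ) + lam * ((N : ℝ) + 1 - 2 * ((j : ℕ) + 1)) / 2) ^ 2)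
      = ∑ j : Fin N, (2 * a j * D j + D j ^ 2) := by
    rw [← Finset.sum_sub_distrib]
    apply Finset.sum_congr rfl
    intro j _
    rw [hmj j]
    simp only [ha]
    ring
  rw [hL]
  -- key cross-term identity
  have hcross : ∑ j : Fin N, a j * D j
      = ∑ j : Fin N, ∑ k : Fin N, if j < k then
          (μ j k : ℝ) * ((n j : ℝ) - (n k : ℝ) + (((k : ℕ) : ℝ) - ((j : ℕ) : ℝ)) * lam)
        else 0 := by
    have expand : ∑ j : Fin N, a j * D j
        = (∑ j : Fin N, ∑ k : Fin N, if j < k then a j * (μ j k : ℝ) else 0)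
          - (∑ j : Fin N, ∑ k : Fin N, if k < j then a j * (μ k j : ℝ) else 0) := by
      simp_rw [hD, mul_sub, Finset.mul_sum, mul_ite, mul_zero, Finset.sum_sub_distrib]
    rw [expand]
    have swap : (∑ j : Fin N, ∑ k : Fin N, if k < j then a j * (μ k j : ℝ) else 0)
        = ∑ j : Fin N, ∑ k : Fin N, if j < k then a k * (μ j k : ℝ) else 0 := by
      rw [Finset.sum_comm]
    rw [swap, ← Finset.sum_sub_distrib]
    apply Finset.sum_congr rfl
    intro j _
    rw [← Finset.sum_sub_distrib]
    apply Finset.sum_congr rfl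
    intro k _
    by_cases hjk : j < k
    · simp only [hjk, if_true, ha]
      ring
    · simp [hjk]
  -- finish
  have split2 : ∑ j : Fin N, (2 * a j * D j + D j ^ 2)
      = 2 * (∑ j : Fin N, a j * D j) + ∑ j : Fin N, D j ^ 2 := by
    rw [Finset.mul_sum, ← Finset.sum_add_distrib]
    exact Finset.sum_congr rfl fun j _ => by ring
  rw [split2, hcross, Finset.mul_sum, ← Finset.sum_add_distrib]
  apply Finset.sum_congr rfl
  intro j _
  simp only [hD]
  ring
end

section
/- Let H(x) = -∑_{j=1}^N ∂²/∂x_j² + γ ∑_{j<k} V(x_j - x_k) with V(r) = 1/(4 sin²(r/2)) and γ = 2λ(λ-1), λ > 0. Then Ψ₀(x) = ∏_{1≤j<k≤N} sin((x_j - x_k)/2)^λ satisfies H Ψ₀ = E₀ Ψ₀ with E₀ = λ²N(N²-1)/12, on the open region where all x_j are distinct mod 2π and ordered so all sin((x_j-x_k)/2) > 0. -/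
/-!
Along the coordinate line `s ↦ update x j s` the ground state is `exp (λ L)` with
`L = ∑_{a<b} log sin ((y_a - y_b)/2)`, so its second derivative is `Ψ ((λ L')² + λ L'')`.
Summed over `j`, the `L''` terms give `-2 ∑_{a<b} V`, while, writing
`cot_{jk} = cot ((x_j - x_k)/2)`, `∑_j L'² = ¼ ∑_j (∑_{k≠j} cot_{jk})²`.
Expanding the square, the diagonal gives `∑_{j≠k} (csc²_{jk} - 1)`, and the cross terms over
ordered distinct triples are symmetrised cyclically: by
`cot (α+β) (cot α + cot β) = cot α cot β - 1` each cyclic sum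
`cot_{jk} cot_{jl} + cot_{kl} cot_{kj} + cot_{lj} cot_{lk}` equals `-1`.
The constant terms add up to `-N(N-1)(N+1)/3`, which produces `E₀`.
-/

open Real Filter Topology Finset Function

theorem Real.cot_neg (θ : ℝ) : cot (-θ) = -cot θ := by
  rw [cot_eq_cos_div_sin, cot_eq_cos_div_sin, sin_neg, cos_neg, div_neg]

lemma cot_sub_div_two_swap (u v : ℝ) : cot ((v - u) / 2) / 2 = -(cot ((u - v) / 2) / 2) := by
  rw [← neg_sub, neg_div, Real.cot_neg, neg_div]

lemma hasDerivAt_log_sin_half {r : ℝ} (h : sin (r / 2) ≠ 0) :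
    HasDerivAt (fun r => log (sin (r / 2))) (cot (r / 2) / 2) r :=
  (((hasDerivAt_id r).div_const 2).sin.log h).congr_deriv (by
    rw [cot_eq_cos_div_sin]
    simp only [id_eq, one_div]
    ring)

lemma hasDerivAt_cot_half_div_two {r : ℝ} (h : sin (r / 2) ≠ 0) :
    HasDerivAt (fun r => cot (r / 2) / 2) (-(1 / (4 * sin (r / 2) ^ 2))) r := by
  have hr := (hasDerivAt_id r).div_const 2
  simp only [cot_eq_cos_div_sin]
  refine ((hr.cos.fun_div hr.sin h).div_const 2).congr_deriv ?_
  simp only [id]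
  field_simp
  linear_combination -4 * sin_sq_add_cos_sq (r / 2)

theorem cot_add_mul_cot_add_cot {α β : ℝ} (hα : sin α ≠ 0) (hβ : sin β ≠ 0)
    (hαβ : sin (α + β) ≠ 0) : cot (α + β) * (cot α + cot β) = cot α * cot β - 1 := by
  simp only [cot_eq_cos_div_sin]
  field_simp
  rw [sin_add, cos_add]
  ring

lemma deriv_deriv_eq_of_eventuallyEq_exp {f L D : ℝ → ℝ} {t c d : ℝ}
    (hf : f =ᶠ[𝓝 t] fun s => exp (c * L s)) (hL : ∀ᶠ s in 𝓝 t, HasDerivAt L (D s) s)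
    (hD : HasDerivAt D d t) :
    deriv (deriv f) t = f t * ((c * D t) ^ 2 + c * d) := by
  have hexp : ∀ s, HasDerivAt L (D s) s →
      HasDerivAt (fun s => exp (c * L s)) (exp (c * L s) * (c * D s)) s :=
    fun s hs => (hs.const_mul c).exp
  have hf' : deriv f =ᶠ[𝓝 t] fun s => exp (c * L s) * (c * D s) := by
    filter_upwards [hf.deriv, hL] with s hfs hs
    rw [hfs, (hexp s hs).deriv]
  rw [hf'.deriv_eq, ((hexp t hL.self_of_nhds).fun_mul (hD.const_mul c)).deriv, hf.eq_of_nhds]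
  ring

section Combinatorics

lemma sum_cyclic {ι M : Type*} [Fintype ι] [AddCommMonoid M] (f : ι → ι → ι → M) :
    ∑ j, ∑ k, ∑ l, f j k l = ∑ j, ∑ k, ∑ l, f l j k := by
  rw [sum_comm]
  exact sum_congr rfl fun _ _ => sum_comm

variable {ι : Type*} [Fintype ι] [DecidableEq ι]

lemma sum_boole_ne (j : ι) : ∑ k, (if j ≠ k then (1 : ℝ) else 0) = Fintype.card ι - 1 := by
  rw [sum_boole, filter_ne, card_erase_of_mem (mem_univ j), card_univ,
    Nat.cast_sub (Fintype.card_pos_iff.2 ⟨j⟩)]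
  simp

lemma sum_boole_distinct_triple :
    ∑ j : ι, ∑ k, ∑ l, (if j ≠ k ∧ j ≠ l ∧ k ≠ l then (1 : ℝ) else 0) =
      Fintype.card ι * (Fintype.card ι - 1) * (Fintype.card ι - 2) := by
  have hl : ∀ j k : ι, ∑ l, (if j ≠ k ∧ j ≠ l ∧ k ≠ l then (1 : ℝ) else 0) =
      (if j ≠ k then 1 else 0) * (Fintype.card ι - 2) := by
    intro j k
    by_cases hjk : j = k
    · simp [hjk]
    · have hpt : ∀ l, (if j ≠ k ∧ j ≠ l ∧ k ≠ l then (1 : ℝ) else 0) =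
          1 - (if j = l then 1 else 0) - (if k = l then 1 else 0) := by
        intro l
        by_cases hjl : j = l <;> by_cases hkl : k = l <;> simp_all
      rw [if_pos hjk, one_mul]
      simp only [hpt, sum_sub_distrib, sum_ite_eq, sum_const, card_univ, mem_univ, if_true,
        nsmul_eq_mul, mul_one]
      ring
  simp only [hl, ← sum_mul, sum_boole_ne, sum_const, card_univ, nsmul_eq_mul]

lemma sq_sum_ne (c : ι → ι → ℝ) (j : ι) :
    (∑ k, if j ≠ k then c j k else 0) ^ 2 =
      ∑ k, (if j ≠ k then c j k ^ 2 else 0) +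
        ∑ k, ∑ l, if j ≠ k ∧ j ≠ l ∧ k ≠ l then c j k * c j l else 0 := by
  rw [sq, sum_mul_sum, ← sum_add_distrib]
  refine sum_congr rfl fun k _ => ?_
  rw [show (if j ≠ k then c j k ^ 2 else 0) =
    ∑ l, if k = l then (if j ≠ k then c j k ^ 2 else 0) else 0 by simp, ← sum_add_distrib]
  refine sum_congr rfl fun l _ => ?_
  by_cases hjk : j = k <;> by_cases hjl : j = l <;> by_cases hkl : k = l <;> simp_all [sq]

lemma sum_distinct_triple_of_cyclic_eq {c : ι → ι → ℝ} {κ : ℝ}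
    (hc : ∀ j k l, j ≠ k → j ≠ l → k ≠ l →
      c j k * c j l + c k l * c k j + c l j * c l k = κ) :
    3 * ∑ j, ∑ k, ∑ l, (if j ≠ k ∧ j ≠ l ∧ k ≠ l then c j k * c j l else 0) =
      Fintype.card ι * (Fintype.card ι - 1) * (Fintype.card ι - 2) * κ := by
  set g : ι → ι → ι → ℝ := fun j k l =>
    if j ≠ k ∧ j ≠ l ∧ k ≠ l then c j k * c j l else 0
  have hg : ∀ j k l,
      g j k l + g l j k + g k l j = κ * if j ≠ k ∧ j ≠ l ∧ k ≠ l then 1 else 0 := by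
    intro j k l
    by_cases h : j ≠ k ∧ j ≠ l ∧ k ≠ l
    · obtain ⟨hjk, hjl, hkl⟩ := h
      simp only [g]
      rw [if_pos ⟨hjk, hjl, hkl⟩, if_pos ⟨hjl.symm, hkl.symm, hjk⟩,
        if_pos ⟨hkl, hjk.symm, hjl.symm⟩, if_pos ⟨hjk, hjl, hkl⟩, ← hc j k l hjk hjl hkl]
      ring
    · simp only [g, h, if_false, mul_zero]
      rw [if_neg (by tauto), if_neg (by tauto)]
      ring
  calc 3 * ∑ j, ∑ k, ∑ l, g j k l
      = ∑ j, ∑ k, ∑ l, (g j k l + g l j k + g k l j) := by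
        simp only [sum_add_distrib]
        rw [← sum_cyclic (fun j k l => g l j k), ← sum_cyclic g]
        ring
    _ = _ := by
        simp only [hg, ← mul_sum, sum_boole_distinct_triple]
        ring

theorem sum_sq_sum_ne_of_cyclic_eq {c : ι → ι → ℝ} {κ : ℝ}
    (hc : ∀ j k l, j ≠ k → j ≠ l → k ≠ l →
      c j k * c j l + c k l * c k j + c l j * c l k = κ) :
    ∑ j, (∑ k, if j ≠ k then c j k else 0) ^ 2 =
      ∑ j, ∑ k, (if j ≠ k then c j k ^ 2 else 0) +
        Fintype.card ι * (Fintype.card ι - 1) * (Fintype.card ι - 2) * κ / 3 := by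
  have h := sum_distinct_triple_of_cyclic_eq hc
  simp only [sq_sum_ne, sum_add_distrib]
  linarith

end Combinatorics

section PairDeriv

variable {ι : Type*} [DecidableEq ι]

/-- `∂(y a - y b)/∂(y j)`. -/
noncomputable def pairDeriv (j a b : ι) : ℝ :=
  (Pi.single j 1 : ι → ℝ) a - (Pi.single j 1 : ι → ℝ) b

lemma hasDerivAt_update_sub_update (x : ι → ℝ) (j a b : ι) (s : ℝ) :
    HasDerivAt (fun s => update x j s a - update x j s b) (pairDeriv j a b) s :=
  have h := hasDerivAt_pi.1 (hasDerivAt_update x j s)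
  (h a).fun_sub (h b)

end PairDeriv

section PairSums

variable {ι : Type*} [Fintype ι] [LinearOrder ι]

lemma sum_ne_eq_two_mul_sum_lt {w : ι → ι → ℝ} (hw : ∀ a b, w a b = w b a) :
    ∑ a, ∑ b, (if a ≠ b then w a b else 0) =
      2 * ∑ a, ∑ b, (if a < b then w a b else 0) := by
  have hsplit : ∀ a b, (if a ≠ b then w a b else 0) =
      (if a < b then w a b else 0) + (if b < a then w b a else 0) := by
    intro a b
    rcases lt_trichotomy a b with h | rfl | h
    · rw [if_pos h.ne, if_pos h, if_neg h.not_gt, add_zero]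
    · simp
    · rw [if_pos h.ne', if_neg h.not_gt, if_pos h, zero_add, hw]
  simp only [hsplit, sum_add_distrib]
  rw [sum_comm (f := fun a b => if b < a then w b a else 0)]
  ring

lemma sum_sum_lt_mul_pairDeriv_sq (w : ι → ι → ℝ) :
    ∑ j, ∑ a, ∑ b, (if a < b then w a b * pairDeriv j a b * pairDeriv j a b else 0) =
      2 * ∑ a, ∑ b, if a < b then w a b else 0 := by
  rw [sum_comm, mul_sum]
  refine sum_congr rfl fun a _ => ?_
  rw [sum_comm, mul_sum]
  refine sum_congr rfl fun b _ => ?_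
  split_ifs with hab
  · have hsq : ∀ j, pairDeriv j a b * pairDeriv j a b =
        (if a = j then 1 else 0) + (if b = j then 1 else 0) := by
      intro j
      by_cases haj : a = j <;> by_cases hbj : b = j <;>
        simp_all [pairDeriv]
    simp only [mul_assoc, hsq, ← mul_sum, sum_add_distrib, sum_ite_eq, mem_univ, if_true]
    ring
  · simp

lemma sum_lt_mul_pairDeriv {c : ι → ι → ℝ} (hc : ∀ a b, c b a = -c a b) (j : ι) :
    ∑ a, ∑ b, (if a < b then c a b * pairDeriv j a b else 0) =
      ∑ k, if j ≠ k then c j k else 0 := by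
  have hswap : ∑ a, ∑ b, (if b < a ∧ a = j then c a b else 0) =
      ∑ a, ∑ b, (if a < b ∧ b = j then -c a b else 0) := by
    rw [sum_comm]
    refine sum_congr rfl fun a _ => sum_congr rfl fun b _ => ?_
    split_ifs
    exacts [hc a b, rfl]
  calc ∑ a, ∑ b, (if a < b then c a b * pairDeriv j a b else 0)
      = ∑ a, ∑ b, ((if a < b ∧ a = j then c a b else 0) +
          (if a < b ∧ b = j then -c a b else 0)) := by
        refine sum_congr rfl fun a _ => sum_congr rfl fun b _ => ?_
        by_cases hab : a < b
        · rcases eq_or_ne a j with rfl | haj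
          · simp [pairDeriv, hab, hab.ne']
          · rcases eq_or_ne b j with rfl | hbj
            · simp [pairDeriv, hab, haj]
            · simp [pairDeriv, hab, haj, hbj]
        · simp [hab]
    _ = ∑ a, ∑ b, ((if a < b ∧ a = j then c a b else 0) +
          (if b < a ∧ a = j then c a b else 0)) := by
        simp only [sum_add_distrib, hswap]
    _ = ∑ a, if a = j then ∑ b, (if a ≠ b then c a b else 0) else 0 := by
        refine sum_congr rfl fun a _ => ?_
        split_ifs with haj
        · subst haj
          refine sum_congr rfl fun b _ => ?_
          rcases lt_trichotomy a b with h | rfl | h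
          · simp [h, h.ne, h.not_gt]
          · simp
          · simp [h, h.ne', h.not_gt]
        · simp [haj]
    _ = ∑ k, if j ≠ k then c j k else 0 := by
        rw [sum_ite_eq']
        simp

end PairSums

section Cotangent

variable {ι : Type*} [LinearOrder ι] {x : ι → ℝ}

lemma sin_half_sub_ne_zero (hx : ∀ a b, a < b → 0 < sin ((x a - x b) / 2)) {j k : ι}
    (hjk : j ≠ k) : sin ((x j - x k) / 2) ≠ 0 := by
  rcases hjk.lt_or_gt with h | h
  · exact (hx j k h).ne'
  · rw [← neg_sub, neg_div, sin_neg, neg_ne_zero]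
    exact (hx k j h).ne'

lemma sum_sq_sum_cot [Fintype ι] (hx : ∀ a b, a < b → 0 < sin ((x a - x b) / 2)) :
    ∑ j, (∑ k, if j ≠ k then cot ((x j - x k) / 2) / 2 else 0) ^ 2 =
      2 * (∑ a, ∑ b, if a < b then 1 / (4 * sin ((x a - x b) / 2) ^ 2) else 0) -
        Fintype.card ι * (Fintype.card ι ^ 2 - 1) / 12 := by
  have hcyc : ∀ j k l, j ≠ k → j ≠ l → k ≠ l →
      cot ((x j - x k) / 2) / 2 * (cot ((x j - x l) / 2) / 2) +
        cot ((x k - x l) / 2) / 2 * (cot ((x k - x j) / 2) / 2) +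
        cot ((x l - x j) / 2) / 2 * (cot ((x l - x k) / 2) / 2) = -1 / 4 := by
    intro j k l hjk hjl hkl
    have hsum : (x j - x k) / 2 + (x k - x l) / 2 = (x j - x l) / 2 := by ring
    have h := cot_add_mul_cot_add_cot (sin_half_sub_ne_zero hx hjk) (sin_half_sub_ne_zero hx hkl)
      (hsum ▸ sin_half_sub_ne_zero hx hjl)
    rw [hsum] at h
    rw [cot_sub_div_two_swap (x j) (x k), cot_sub_div_two_swap (x j) (x l),
      cot_sub_div_two_swap (x k) (x l)]
    linear_combination h / 4
  have hsq : ∀ j k, (if j ≠ k then (cot ((x j - x k) / 2) / 2) ^ 2 else 0) =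
      (if j ≠ k then 1 / (4 * sin ((x j - x k) / 2) ^ 2) else 0) -
        1 / 4 * (if j ≠ k then 1 else 0) := by
    intro j k
    split_ifs with hjk
    · have hs := sin_half_sub_ne_zero hx hjk
      rw [cot_eq_cos_div_sin]
      field_simp
      linear_combination 4 * sin_sq_add_cos_sq ((x j - x k) / 2)
    · simp
  have hsymm : ∀ a b,
      1 / (4 * sin ((x a - x b) / 2) ^ 2) = 1 / (4 * sin ((x b - x a) / 2) ^ 2) := by
    intro a b
    rw [← neg_sub, neg_div, sin_neg, neg_sq]
  rw [sum_sq_sum_ne_of_cyclic_eq hcyc]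
  simp only [hsq, sum_sub_distrib, ← mul_sum, sum_boole_ne, sum_ne_eq_two_mul_sum_lt hsymm,
    sum_const, card_univ, nsmul_eq_mul]
  ring

end Cotangent

section GroundState

variable {ι : Type*} [Fintype ι] [LinearOrder ι]

noncomputable def groundState (lam : ℝ) (y : ι → ℝ) : ℝ :=
  ∏ a, ∏ b, if a < b then sin ((y a - y b) / 2) ^ lam else 1

noncomputable def logGroundState (y : ι → ℝ) : ℝ :=
  ∑ a, ∑ b, if a < b then log (sin ((y a - y b) / 2)) else 0

lemma groundState_eq_exp {y : ι → ℝ} (hy : ∀ a b, a < b → 0 < sin ((y a - y b) / 2))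
    (lam : ℝ) : groundState lam y = exp (lam * logGroundState y) := by
  simp only [groundState, logGroundState, mul_sum, exp_sum]
  refine prod_congr rfl fun a _ => prod_congr rfl fun b _ => ?_
  split_ifs with hab
  · rw [rpow_def_of_pos (hy a b hab), mul_comm]
  · simp

lemma eventually_sin_pos_update {x : ι → ℝ} (hx : ∀ a b, a < b → 0 < sin ((x a - x b) / 2))
    (j : ι) :
    ∀ᶠ s in 𝓝 (x j), ∀ a b, a < b → 0 < sin ((update x j s a - update x j s b) / 2) := by
  simp only [eventually_all]
  intro a b hab
  have hcont := ((hasDerivAt_update_sub_update x j a b (x j)).div_const 2).sin.continuousAt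
  refine hcont.eventually (lt_mem_nhds ?_)
  simpa using hx a b hab

lemma hasDerivAt_logGroundState_update {x : ι → ℝ} {j : ι} {s : ℝ}
    (hs : ∀ a b, a < b → sin ((update x j s a - update x j s b) / 2) ≠ 0) :
    HasDerivAt (fun s => logGroundState (update x j s))
      (∑ a, ∑ b, if a < b then
        cot ((update x j s a - update x j s b) / 2) / 2 * pairDeriv j a b
        else 0) s := by
  refine HasDerivAt.fun_sum fun a _ => HasDerivAt.fun_sum fun b _ => ?_
  split_ifs with hab
  · exact (hasDerivAt_log_sin_half (hs a b hab)).comp s (hasDerivAt_update_sub_update x j a b s)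
  · exact hasDerivAt_const s 0

lemma hasDerivAt_sum_cot_update {x : ι → ℝ} {j : ι} {s : ℝ}
    (hs : ∀ a b, a < b → sin ((update x j s a - update x j s b) / 2) ≠ 0) :
    HasDerivAt (fun s => ∑ a, ∑ b, if a < b then
        cot ((update x j s a - update x j s b) / 2) / 2 * pairDeriv j a b
        else 0)
      (∑ a, ∑ b, if a < b then
        -(1 / (4 * sin ((update x j s a - update x j s b) / 2) ^ 2)) *
          pairDeriv j a b * pairDeriv j a b
        else 0) s := by
  refine HasDerivAt.fun_sum fun a _ => HasDerivAt.fun_sum fun b _ => ?_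
  split_ifs with hab
  · exact ((hasDerivAt_cot_half_div_two (hs a b hab)).comp s
      (hasDerivAt_update_sub_update x j a b s)).mul_const _
  · exact hasDerivAt_const s 0

lemma deriv_deriv_groundState_update {x : ι → ℝ}
    (hx : ∀ a b, a < b → 0 < sin ((x a - x b) / 2)) (lam : ℝ) (j : ι) :
    deriv (deriv fun s => groundState lam (update x j s)) (x j) = groundState lam x *
      ((lam * ∑ a, ∑ b, if a < b then
          cot ((x a - x b) / 2) / 2 * pairDeriv j a b else 0) ^ 2 +
        lam * ∑ a, ∑ b, if a < b then
          -(1 / (4 * sin ((x a - x b) / 2) ^ 2)) *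
            pairDeriv j a b * pairDeriv j a b
          else 0) := by
  have hev := eventually_sin_pos_update hx j
  have h := deriv_deriv_eq_of_eventuallyEq_exp
    (hev.mono fun s hs => groundState_eq_exp hs lam)
    (hev.mono fun s hs => hasDerivAt_logGroundState_update fun a b hab => (hs a b hab).ne')
    (hasDerivAt_sum_cot_update (s := x j) (by simpa using fun a b hab => (hx a b hab).ne'))
  simpa using h

end GroundState

theorem stmt_7_general (N : ℕ) (lam : ℝ)
    (x : Fin N → ℝ)
    (hx : ∀ j k : Fin N, j < k → 0 < Real.sin ((x j - x k) / 2)) :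
    let Ψ : (Fin N → ℝ) → ℝ := fun y =>
      ∏ j : Fin N, ∏ k : Fin N, if j < k then Real.sin ((y j - y k) / 2) ^ lam else 1
    (-(∑ j : Fin N, deriv (deriv (fun s => Ψ (Function.update x j s))) (x j))
        + (2 * lam * (lam - 1)) *
          (∑ j : Fin N, ∑ k : Fin N,
            if j < k then 1 / (4 * Real.sin ((x j - x k) / 2) ^ 2) else 0) * Ψ x
      = (lam ^ 2 * (N : ℝ) * ((N : ℝ) ^ 2 - 1) / 12) * Ψ x) := by
  intro Ψ
  have hΨ : Ψ x = groundState lam x := rfl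
  have hderiv : ∀ j, deriv (deriv fun s => Ψ (update x j s)) (x j) = _ :=
    deriv_deriv_groundState_update hx lam
  have hneg : ∀ a b : Fin N, (if a < b then -(1 / (4 * sin ((x a - x b) / 2) ^ 2)) else 0) =
      -(if a < b then 1 / (4 * sin ((x a - x b) / 2) ^ 2) else 0) := by
    intro a b
    split_ifs <;> simp
  simp only [hderiv, hΨ, sum_lt_mul_pairDeriv fun a b => cot_sub_div_two_swap (x a) (x b),
    ← mul_sum, sum_add_distrib, mul_pow, sum_sum_lt_mul_pairDeriv_sq, hneg, sum_neg_distrib,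
    sum_sq_sum_cot hx, Fintype.card_fin]
  ring

/-- The ground state `Ψ₀(x) = ∏_{j<k} sin((x_j-x_k)/2)^λ` satisfies `H Ψ₀ = E₀ Ψ₀` with
`E₀ = λ² N (N²-1)/12`, on the region where all `sin((x_j-x_k)/2) > 0` for `j < k`.
Here `H = -∑_j ∂²/∂x_j² + 2λ(λ-1) ∑_{j<k} 1/(4 sin²((x_j-x_k)/2))`. -/
theorem stmt_7 (N : ℕ) (hN : 2 ≤ N) (lam : ℝ) (hlam : 0 < lam)
    (x : Fin N → ℝ)
    (hx : ∀ j k : Fin N, j < k → 0 < Real.sin ((x j - x k) / 2)) :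
    let Ψ : (Fin N → ℝ) → ℝ := fun y =>
      ∏ j : Fin N, ∏ k : Fin N, if j < k then Real.sin ((y j - y k) / 2) ^ lam else 1
    (-(∑ j : Fin N, deriv (deriv (fun s => Ψ (Function.update x j s))) (x j))
        + (2 * lam * (lam - 1)) *
          (∑ j : Fin N, ∑ k : Fin N,
            if j < k then 1 / (4 * Real.sin ((x j - x k) / 2) ^ 2) else 0) * Ψ x
      = (lam ^ 2 * (N : ℝ) * ((N : ℝ) ^ 2 - 1) / 12) * Ψ x) :=
  stmt_7_general N lam x hx
end

section
/- Let Ψ₀(x) = ∏_{j<k} sin((x_j-x_k)/2)^λ and let H be the Sutherland differential operator. Then for smooth Φ on the region where Ψ₀ > 0, (1/Ψ₀)·H(Φ·Ψ₀) - E₀·Φ = H'Φ, where H' = -∑_j ∂²/∂x_j² - iλ ∑_{j<k} ((e^{ix_j} + e^{ix_k})/(e^{ix_j} - e^{ix_k}))·(∂/∂x_j - ∂/∂x_k) and E₀ = λ²N(N²-1)/12. -/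
open Finset

variable {N : ℕ}

noncomputable def ct (x : Fin N → ℝ) (m n : Fin N) : ℝ :=
  Real.cos ((x m - x n) / 2) / Real.sin ((x m - x n) / 2)

def ee (j m : Fin N) : ℝ := if m = j then 1 else 0

noncomputable def PsiD (lam : ℝ) (x : Fin N → ℝ) : ℝ :=
  ∏ j : Fin N, ∏ k : Fin N, if j < k then Real.sin ((x j - x k) / 2) ^ lam else 1

noncomputable def pathL (lam : ℝ) (x : Fin N → ℝ) (j : Fin N) (s : ℝ) : ℝ :=
  ∑ m : Fin N, ∑ n : Fin N, if m < n then
    lam * Real.log (Real.sin ((Function.update x j s m - Function.update x j s n) / 2)) else 0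

noncomputable def pathL1 (lam : ℝ) (x : Fin N → ℝ) (j : Fin N) (s : ℝ) : ℝ :=
  ∑ m : Fin N, ∑ n : Fin N, if m < n then
    lam * ((Real.cos ((Function.update x j s m - Function.update x j s n) / 2) *
      ((ee j m - ee j n) / 2)) /
      Real.sin ((Function.update x j s m - Function.update x j s n) / 2)) else 0

noncomputable def pathL2 (lam : ℝ) (x : Fin N → ℝ) (j : Fin N) (s : ℝ) : ℝ :=
  ∑ m : Fin N, ∑ n : Fin N, if m < n then
    lam * ((-Real.sin ((Function.update x j s m - Function.update x j s n) / 2) *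
        ((ee j m - ee j n) / 2) * ((ee j m - ee j n) / 2) *
        Real.sin ((Function.update x j s m - Function.update x j s n) / 2) -
        Real.cos ((Function.update x j s m - Function.update x j s n) / 2) *
        ((ee j m - ee j n) / 2) *
        (Real.cos ((Function.update x j s m - Function.update x j s n) / 2) *
        ((ee j m - ee j n) / 2))) /
      Real.sin ((Function.update x j s m - Function.update x j s n) / 2) ^ 2) else 0

def Ugood (N : ℕ) : Set (Fin N → ℝ) :=
  {y : Fin N → ℝ | ∀ j k : Fin N, j < k → 0 < Real.sin ((y j - y k) / 2)}

lemma isOpen_Ugood : IsOpen (Ugood N) := by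
  have : Ugood N = ⋂ (j : Fin N) (k : Fin N), {y : Fin N → ℝ | j < k → 0 < Real.sin ((y j - y k) / 2)} := by
    ext y; simp [Ugood, Set.mem_iInter]
  rw [this]
  refine isOpen_iInter_of_finite fun j => isOpen_iInter_of_finite fun k => ?_
  by_cases h : j < k
  · have : {y : Fin N → ℝ | j < k → 0 < Real.sin ((y j - y k) / 2)}
        = (fun y : Fin N → ℝ => Real.sin ((y j - y k) / 2)) ⁻¹' Set.Ioi 0 := by
      ext y; simp [h]
    rw [this]
    have hc : Continuous (fun y : Fin N → ℝ => Real.sin ((y j - y k) / 2)) :=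
      Real.continuous_sin.comp (((continuous_apply j).sub (continuous_apply k)).div_const 2)
    exact hc.isOpen_preimage _ isOpen_Ioi
  · have : {y : Fin N → ℝ | j < k → 0 < Real.sin ((y j - y k) / 2)} = Set.univ := by
      ext y; simp [h]
    rw [this]; exact isOpen_univ

lemma sin_ne {x : Fin N → ℝ} (hx : x ∈ Ugood N) {m n : Fin N} (h : m ≠ n) :
    Real.sin ((x m - x n) / 2) ≠ 0 := by
  rcases lt_or_gt_of_ne h with h1 | h1
  · exact ne_of_gt (hx m n h1)
  · have := hx n m h1
    have : Real.sin ((x m - x n) / 2) = -Real.sin ((x n - x m) / 2) := by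
      rw [← Real.sin_neg]; ring_nf
    rw [this]
    simpa using ne_of_gt (hx n m h1)

lemma psi_pos {lam : ℝ} {x : Fin N → ℝ} (hx : x ∈ Ugood N) : 0 < PsiD lam x := by
  refine Finset.prod_pos fun j _ => Finset.prod_pos fun k _ => ?_
  by_cases h : j < k
  · simp only [h, if_true]
    exact Real.rpow_pos_of_pos (hx j k h) lam
  · simp [h]

lemma psi_eq_exp {lam : ℝ} {x : Fin N → ℝ} (j : Fin N) (s : ℝ)
    (hs : Function.update x j s ∈ Ugood N) :
    PsiD lam (Function.update x j s) = Real.exp (pathL lam x j s) := by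
  rw [pathL, Real.exp_sum]
  refine Finset.prod_congr rfl fun m _ => ?_
  rw [Real.exp_sum]
  refine Finset.prod_congr rfl fun n _ => ?_
  by_cases h : m < n
  · simp only [h, if_true]
    rw [Real.rpow_def_of_pos (hs m n h), mul_comm]
  · simp [h]

lemma hasDerivAt_upd (x : Fin N → ℝ) (j m : Fin N) (s : ℝ) :
    HasDerivAt (fun t => Function.update x j t m) (ee j m) s := by
  simp only [Function.update_apply, ee]
  by_cases h : m = j
  · simp only [h, if_true]; exact hasDerivAt_id s
  · simp only [h, if_false]; exact hasDerivAt_const s (x m)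

lemma hasDerivAt_pathL {lam : ℝ} {x : Fin N → ℝ} (j : Fin N) (s : ℝ)
    (hs : Function.update x j s ∈ Ugood N) :
    HasDerivAt (pathL lam x j) (pathL1 lam x j s) s := by
  refine HasDerivAt.fun_sum fun m _ => HasDerivAt.fun_sum fun n _ => ?_
  by_cases h : m < n
  · simp only [h, if_true]
    have hg : HasDerivAt (fun t => (Function.update x j t m - Function.update x j t n) / 2)
        ((ee j m - ee j n) / 2) s :=
      ((hasDerivAt_upd x j m s).sub (hasDerivAt_upd x j n s)).div_const 2
    have hne : Real.sin ((Function.update x j s m - Function.update x j s n) / 2) ≠ 0 :=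
      ne_of_gt (hs m n h)
    exact ((hg.sin).log hne).const_mul lam
  · simp only [h, if_false]
    exact hasDerivAt_const s 0

lemma hasDerivAt_pathL1 {lam : ℝ} {x : Fin N → ℝ} (j : Fin N) (s : ℝ)
    (hs : Function.update x j s ∈ Ugood N) :
    HasDerivAt (pathL1 lam x j) (pathL2 lam x j s) s := by
  refine HasDerivAt.fun_sum fun m _ => HasDerivAt.fun_sum fun n _ => ?_
  by_cases h : m < n
  · simp only [h, if_true]
    have hg : HasDerivAt (fun t => (Function.update x j t m - Function.update x j t n) / 2)
        ((ee j m - ee j n) / 2) s :=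
      ((hasDerivAt_upd x j m s).sub (hasDerivAt_upd x j n s)).div_const 2
    have hne : Real.sin ((Function.update x j s m - Function.update x j s n) / 2) ≠ 0 :=
      ne_of_gt (hs m n h)
    have hc : HasDerivAt (fun t => Real.cos ((Function.update x j t m - Function.update x j t n) / 2) *
        ((ee j m - ee j n) / 2))
        (-Real.sin ((Function.update x j s m - Function.update x j s n) / 2) *
          ((ee j m - ee j n) / 2) * ((ee j m - ee j n) / 2)) s := (hg.cos).mul_const _
    exact (hc.div hg.sin hne).const_mul lam
  · simp only [h, if_false]
    exact hasDerivAt_const s 0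

lemma hasDerivAt_psi_path {lam : ℝ} {x : Fin N → ℝ} (j : Fin N) (s : ℝ)
    (hs : Function.update x j s ∈ Ugood N) :
    HasDerivAt (fun t => PsiD lam (Function.update x j t))
      (PsiD lam (Function.update x j s) * pathL1 lam x j s) s := by
  have hV : IsOpen {t : ℝ | Function.update x j t ∈ Ugood N} := by
    have : Continuous (fun t : ℝ => Function.update x j t) := by
      refine continuous_pi fun m => ?_
      simp only [Function.update_apply]
      by_cases h : m = j
      · simpa [h] using continuous_id'
      · simp [h, continuous_const]
    exact isOpen_Ugood.preimage this
  have hmem : s ∈ {t : ℝ | Function.update x j t ∈ Ugood N} := hs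
  have hev : (fun t => PsiD lam (Function.update x j t)) =ᶠ[nhds s]
      (fun t => Real.exp (pathL lam x j t)) := by
    filter_upwards [hV.mem_nhds hmem] with t ht
    exact psi_eq_exp j t ht
  have hd : HasDerivAt (fun t => Real.exp (pathL lam x j t))
      (Real.exp (pathL lam x j s) * pathL1 lam x j s) s :=
    (hasDerivAt_pathL j s hs).exp
  have := hd.congr_of_eventuallyEq hev
  rwa [← psi_eq_exp j s hs] at this

lemma contDiff_upd (x : Fin N → ℝ) (j : Fin N) :
    ContDiff ℝ (⊤ : ℕ∞) (fun t : ℝ => Function.update x j t) := by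
  refine contDiff_pi.mpr fun m => ?_
  simp only [Function.update_apply]
  by_cases h : m = j
  · simp only [h, if_true]; exact contDiff_id
  · simp only [h, if_false]; exact contDiff_const

lemma isOpen_V (x : Fin N → ℝ) (j : Fin N) :
    IsOpen {t : ℝ | Function.update x j t ∈ Ugood N} :=
  isOpen_Ugood.preimage (contDiff_upd x j).continuous

lemma deriv2_mul {lam : ℝ} {x : Fin N → ℝ} (hx : x ∈ Ugood N)
    {Φ : (Fin N → ℝ) → ℂ} (hΦ : ContDiffOn ℝ (⊤ : ℕ∞) Φ (Ugood N)) (j : Fin N) :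
    deriv (deriv (fun s => Φ (Function.update x j s) *
        (PsiD lam (Function.update x j s) : ℂ))) (x j)
      = deriv (deriv (fun s => Φ (Function.update x j s))) (x j) * (PsiD lam x : ℂ)
        + deriv (fun s => Φ (Function.update x j s)) (x j) *
            ((2 * PsiD lam x * pathL1 lam x j (x j) : ℝ) : ℂ)
        + Φ x * ((PsiD lam x * (pathL1 lam x j (x j) ^ 2 + pathL2 lam x j (x j)) : ℝ) : ℂ) := by
  set V : Set ℝ := {t : ℝ | Function.update x j t ∈ Ugood N} with hVdef
  have hV : IsOpen V := isOpen_V x j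
  have hxj : x j ∈ V := by
    show Function.update x j (x j) ∈ Ugood N
    rwa [Function.update_eq_self]
  set f : ℝ → ℂ := fun s => Φ (Function.update x j s) with hfdef
  have hf : ContDiffOn ℝ (⊤ : ℕ∞) f V :=
    hΦ.comp (contDiff_upd x j).contDiffOn (fun t ht => ht)
  have hf1 : ∀ s ∈ V, HasDerivAt f (deriv f s) s := fun s hs =>
    (((hf.contDiffAt (hV.mem_nhds hs)).differentiableAt (by simp)).hasDerivAt)
  have hq : ∀ s ∈ V, HasDerivAt (fun t => PsiD lam (Function.update x j t))
      (PsiD lam (Function.update x j s) * pathL1 lam x j s) s := fun s hs =>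
    hasDerivAt_psi_path j s hs
  have hprod : ∀ s ∈ V, HasDerivAt (fun t => f t * (PsiD lam (Function.update x j t) : ℂ))
      (deriv f s * (PsiD lam (Function.update x j s) : ℂ)
        + f s * ((PsiD lam (Function.update x j s) * pathL1 lam x j s : ℝ) : ℂ)) s :=
    fun s hs => (hf1 s hs).mul ((hq s hs).ofReal_comp)
  have hev : deriv (fun t => f t * (PsiD lam (Function.update x j t) : ℂ)) =ᶠ[nhds (x j)]
      (fun s => deriv f s * (PsiD lam (Function.update x j s) : ℂ)
        + f s * ((PsiD lam (Function.update x j s) * pathL1 lam x j s : ℝ) : ℂ)) := by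
    filter_upwards [hV.mem_nhds hxj] with s hs
    exact (hprod s hs).deriv
  have hstep : deriv (deriv (fun t => f t * (PsiD lam (Function.update x j t) : ℂ))) (x j)
      = deriv (fun s => deriv f s * (PsiD lam (Function.update x j s) : ℂ)
        + f s * ((PsiD lam (Function.update x j s) * pathL1 lam x j s : ℝ) : ℂ)) (x j) :=
    hev.deriv_eq
  -- derivatives at x j
  have hxU : Function.update x j (x j) ∈ Ugood N := by rwa [Function.update_eq_self]
  have hdf : ContDiffOn ℝ 1 (deriv f) V := hf.deriv_of_isOpen hV (WithTop.coe_le_coe.mpr le_top)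
  have hD2 : HasDerivAt (deriv f) (deriv (deriv f) (x j)) (x j) :=
    ((hdf.contDiffAt (hV.mem_nhds hxj)).differentiableAt one_ne_zero).hasDerivAt
  have hq' : HasDerivAt (fun t => PsiD lam (Function.update x j t))
      (PsiD lam (Function.update x j (x j)) * pathL1 lam x j (x j)) (x j) :=
    hasDerivAt_psi_path j (x j) hxU
  have hL1 : HasDerivAt (pathL1 lam x j) (pathL2 lam x j (x j)) (x j) :=
    hasDerivAt_pathL1 j (x j) hxU
  have hf' : HasDerivAt f (deriv f (x j)) (x j) := hf1 (x j) hxj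
  have hG := (hD2.fun_mul hq'.ofReal_comp).fun_add (hf'.fun_mul ((hq'.fun_mul hL1).ofReal_comp))
  simp only [hfdef] at hstep hG ⊢
  rw [hstep, hG.deriv]
  simp only [Function.update_eq_self]
  push_cast
  ring

lemma sum_erase_indicator {α M : Type*} [AddCommMonoid M] [DecidableEq α]
    (s : Finset α) (a : α) (h : α → M) :
    ∑ b ∈ s.erase a, h b = ∑ b ∈ s, if b = a then 0 else h b := by
  rw [← Finset.sum_erase s (by simp : (if a = a then (0:M) else h a) = 0)]
  exact Finset.sum_congr rfl fun b hb => by simp [Finset.ne_of_mem_erase hb]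

lemma erase_split {M : Type*} [AddCommMonoid M] (j : Fin N) (g : Fin N → M) :
    ∑ k ∈ Finset.univ.erase j, g k
      = (∑ k : Fin N, if j < k then g k else 0) + (∑ k : Fin N, if k < j then g k else 0) := by
  rw [sum_erase_indicator, ← Finset.sum_add_distrib]
  refine Finset.sum_congr rfl fun k _ => ?_
  rcases lt_trichotomy j k with h | h | h
  · simp [h, ne_of_gt h, not_lt_of_gt h]
  · simp [h.symm, lt_irrefl]
  · simp [h, ne_of_lt h, not_lt_of_gt h]

lemma ct_anti (x : Fin N → ℝ) (m n : Fin N) : ct x n m = - ct x m n := by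
  unfold ct
  have h : (x n - x m) / 2 = -((x m - x n) / 2) := by ring
  rw [h, Real.cos_neg, Real.sin_neg, div_neg]

lemma sum_ee (j : Fin N) (H : Fin N → ℝ) : ∑ m : Fin N, ee j m * H m = H j := by
  simp [ee, ite_mul, Finset.sum_ite_eq']

lemma pathL1_at (lam : ℝ) (x : Fin N → ℝ) (j : Fin N) :
    pathL1 lam x j (x j) = lam / 2 * ∑ k ∈ Finset.univ.erase j, ct x j k := by
  have step1 : pathL1 lam x j (x j)
      = (∑ m : Fin N, ∑ n : Fin N, if m < n then ee j m * (lam / 2 * ct x m n) else 0)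
        + (∑ m : Fin N, ∑ n : Fin N, if m < n then ee j n * (lam / 2 * ct x n m) else 0) := by
    unfold pathL1
    rw [← Finset.sum_add_distrib]
    refine Finset.sum_congr rfl fun m _ => ?_
    rw [← Finset.sum_add_distrib]
    refine Finset.sum_congr rfl fun n _ => ?_
    simp only [Function.update_eq_self]
    split_ifs with h
    · rw [ct_anti x m n]; unfold ct; ring
    · ring
  rw [step1]
  have e1 : (∑ m : Fin N, ∑ n : Fin N, if m < n then ee j m * (lam / 2 * ct x m n) else 0)
      = ∑ n : Fin N, if j < n then lam / 2 * ct x j n else 0 := by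
    have : ∀ m : Fin N, (∑ n : Fin N, if m < n then ee j m * (lam / 2 * ct x m n) else 0)
        = ee j m * ∑ n : Fin N, (if m < n then lam / 2 * ct x m n else 0) := by
      intro m
      rw [Finset.mul_sum]
      exact Finset.sum_congr rfl fun n _ => by split_ifs <;> ring
    rw [Finset.sum_congr rfl fun m _ => this m, sum_ee]
  have e2 : (∑ m : Fin N, ∑ n : Fin N, if m < n then ee j n * (lam / 2 * ct x n m) else 0)
      = ∑ m : Fin N, if m < j then lam / 2 * ct x j m else 0 := by
    rw [Finset.sum_comm]
    have : ∀ n : Fin N, (∑ m : Fin N, if m < n then ee j n * (lam / 2 * ct x n m) else 0)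
        = ee j n * ∑ m : Fin N, (if m < n then lam / 2 * ct x n m else 0) := by
      intro n
      rw [Finset.mul_sum]
      exact Finset.sum_congr rfl fun m _ => by split_ifs <;> ring
    rw [Finset.sum_congr rfl fun n _ => this n, sum_ee]
  rw [e1, e2, erase_split j, mul_add, Finset.mul_sum, Finset.mul_sum]
  congr 1
  · exact Finset.sum_congr rfl fun k _ => by split_ifs <;> ring
  · exact Finset.sum_congr rfl fun k _ => by split_ifs <;> ring

lemma sum_ee_alone (m : Fin N) : ∑ j : Fin N, ee j m = 1 := by
  simp [ee, Finset.sum_ite_eq']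

lemma sum_sq_ee {m n : Fin N} (h : m ≠ n) :
    ∑ j : Fin N, ((ee j m - ee j n) / 2) ^ 2 = 1 / 2 := by
  have hpt : ∀ j : Fin N, ((ee j m - ee j n) / 2) ^ 2 = (ee j m + ee j n) / 4 := by
    intro j
    unfold ee
    split_ifs with h1 h2 h2
    · exact absurd (h1.trans h2.symm) h
    · norm_num
    · norm_num
    · norm_num
  rw [Finset.sum_congr rfl fun j _ => hpt j]
  have : ∑ j : Fin N, (ee j m + ee j n) / 4
      = ((∑ j : Fin N, ee j m) + ∑ j : Fin N, ee j n) / 4 := by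
    rw [← Finset.sum_add_distrib, Finset.sum_div]
  rw [this, sum_ee_alone, sum_ee_alone]
  norm_num

lemma pathL2_sum (lam : ℝ) {x : Fin N → ℝ} (hx : x ∈ Ugood N) :
    ∑ j : Fin N, pathL2 lam x j (x j)
      = ∑ m : Fin N, ∑ n : Fin N, if m < n then
          -(lam / 2) * (1 / Real.sin ((x m - x n) / 2) ^ 2) else 0 := by
  unfold pathL2
  simp only [Function.update_eq_self]
  rw [Finset.sum_comm]
  refine Finset.sum_congr rfl fun m _ => ?_
  rw [Finset.sum_comm]
  refine Finset.sum_congr rfl fun n _ => ?_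
  by_cases h : m < n
  · simp only [h, if_true]
    have hne : Real.sin ((x m - x n) / 2) ≠ 0 := sin_ne hx (ne_of_lt h)
    have hpt : ∀ j : Fin N,
        lam * ((-Real.sin ((x m - x n) / 2) * ((ee j m - ee j n) / 2) * ((ee j m - ee j n) / 2) *
          Real.sin ((x m - x n) / 2) -
          Real.cos ((x m - x n) / 2) * ((ee j m - ee j n) / 2) *
          (Real.cos ((x m - x n) / 2) * ((ee j m - ee j n) / 2))) /
          Real.sin ((x m - x n) / 2) ^ 2)
        = (lam * (-(Real.sin ((x m - x n) / 2) ^ 2) - Real.cos ((x m - x n) / 2) ^ 2) /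
            Real.sin ((x m - x n) / 2) ^ 2) * ((ee j m - ee j n) / 2) ^ 2 := by
      intro j; ring
    rw [Finset.sum_congr rfl fun j _ => hpt j, ← Finset.mul_sum, sum_sq_ee (ne_of_lt h)]
    have hpy := Real.sin_sq_add_cos_sq ((x m - x n) / 2)
    field_simp
    linear_combination (-lam) * hpy
  · simp [h]

lemma ct_sq {x : Fin N → ℝ} (hx : x ∈ Ugood N) {m n : Fin N} (h : m ≠ n) :
    ct x m n ^ 2 = 1 / Real.sin ((x m - x n) / 2) ^ 2 - 1 := by
  have hne := sin_ne hx h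
  have hpy := Real.sin_sq_add_cos_sq ((x m - x n) / 2)
  unfold ct
  field_simp
  linear_combination hpy

lemma triple_ct {x : Fin N → ℝ} (hx : x ∈ Ugood N) {j k l : Fin N}
    (hjk : j ≠ k) (hjl : j ≠ l) (hkl : k ≠ l) :
    ct x j k * ct x j l + ct x k l * ct x k j + ct x l j * ct x l k = -1 := by
  have h1 := sin_ne hx hjk
  have h2 := sin_ne hx hkl
  have h3 := sin_ne hx hjl
  have hab : (x j - x l) / 2 = (x j - x k) / 2 + (x k - x l) / 2 := by ring
  rw [ct_anti x j k, ct_anti x j l, ct_anti x k l]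
  unfold ct
  rw [hab, Real.sin_add, Real.cos_add]
  set a := (x j - x k) / 2
  set b := (x k - x l) / 2
  have hsum : Real.sin a * Real.cos b + Real.cos a * Real.sin b ≠ 0 := by
    have := Real.sin_add a b
    rw [← this, ← hab]
    exact h3
  field_simp
  ring

lemma sq_sum_split {α : Type*} [DecidableEq α] (s : Finset α) (g : α → ℝ) :
    (∑ k ∈ s, g k) ^ 2
      = (∑ k ∈ s, g k ^ 2) + ∑ k ∈ s, ∑ l ∈ s.erase k, g k * g l := by
  rw [sq, Finset.sum_mul_sum, ← Finset.sum_add_distrib]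
  refine Finset.sum_congr rfl fun k hk => ?_
  rw [← Finset.add_sum_erase s (fun l => g k * g l) hk, sq]

lemma cube_rot (F : Fin N → Fin N → Fin N → ℝ) :
    (∑ j : Fin N, ∑ k : Fin N, ∑ l : Fin N, F k l j)
      = ∑ j : Fin N, ∑ k : Fin N, ∑ l : Fin N, F j k l := by
  rw [Finset.sum_comm]
  exact Finset.sum_congr rfl fun k _ => Finset.sum_comm

lemma pair_count :
    (∑ m : Fin N, ∑ n : Fin N, if m < n then (1:ℝ) else 0)
      = (N : ℝ) * ((N : ℝ) - 1) / 2 := by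
  have key : (∑ m : Fin N, ∑ n : Fin N, if m < n then (1:ℝ) else 0)
      + ((∑ m : Fin N, ∑ n : Fin N, if n < m then (1:ℝ) else 0)
      + (∑ m : Fin N, ∑ n : Fin N, if m = n then (1:ℝ) else 0))
      = (N : ℝ) * (N : ℝ) := by
    rw [← Finset.sum_add_distrib]
    simp only [← Finset.sum_add_distrib]
    have : ∀ m n : Fin N, ((if m < n then (1:ℝ) else 0) + ((if n < m then (1:ℝ) else 0)
        + (if m = n then (1:ℝ) else 0))) = 1 := by
      intro m n
      rcases lt_trichotomy m n with h | h | h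
      · simp [h, not_lt_of_gt h, h.ne]
      · simp [h, lt_irrefl]
      · simp [h, not_lt_of_gt h, h.ne']
    rw [Finset.sum_congr rfl fun m _ => Finset.sum_congr rfl fun n _ => this m n]
    simp [Finset.card_univ]
  have h2 : (∑ m : Fin N, ∑ n : Fin N, if n < m then (1:ℝ) else 0)
      = (∑ m : Fin N, ∑ n : Fin N, if m < n then (1:ℝ) else 0) := Finset.sum_comm
  have h3 : (∑ m : Fin N, ∑ n : Fin N, if m = n then (1:ℝ) else 0) = (N : ℝ) := by
    simp [Finset.sum_ite_eq, Finset.card_univ]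
  rw [h2, h3] at key
  linarith

lemma cube_count :
    (∑ j : Fin N, ∑ k : Fin N, ∑ l : Fin N,
        if j ≠ k ∧ j ≠ l ∧ k ≠ l then (1:ℝ) else 0)
      = (N : ℝ) * ((N : ℝ) - 1) * ((N : ℝ) - 2) := by
  have inner : ∀ j k : Fin N, (∑ l : Fin N, if j ≠ k ∧ j ≠ l ∧ k ≠ l then (1:ℝ) else 0)
      = if j = k then 0 else ((N : ℝ) - 2) := by
    intro j k
    by_cases hjk : j = k
    · simp [hjk]
    · simp only [hjk, if_false]
      have hpt : ∀ l : Fin N, (if j ≠ k ∧ j ≠ l ∧ k ≠ l then (1:ℝ) else 0)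
          = 1 - (if l = j then (1:ℝ) else 0) - (if l = k then (1:ℝ) else 0) := by
        intro l
        by_cases h1 : l = j <;> by_cases h2 : l = k <;>
          simp_all [eq_comm] <;> norm_num
      rw [Finset.sum_congr rfl fun l _ => hpt l]
      simp [Finset.sum_sub_distrib, Finset.sum_ite_eq', Finset.card_univ]
      ring
  have mid : ∀ j : Fin N, (∑ k : Fin N, if j = k then (0:ℝ) else ((N : ℝ) - 2))
      = ((N : ℝ) - 1) * ((N : ℝ) - 2) := by
    intro j
    have hpt : ∀ k : Fin N, (if j = k then (0:ℝ) else ((N : ℝ) - 2))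
        = ((N : ℝ) - 2) - (if j = k then ((N : ℝ) - 2) else 0) := by
      intro k; split_ifs <;> ring
    rw [Finset.sum_congr rfl fun k _ => hpt k]
    simp [Finset.sum_sub_distrib, Finset.sum_ite_eq, Finset.card_univ]
    ring
  rw [Finset.sum_congr rfl fun j _ => Finset.sum_congr rfl fun k _ => inner j k]
  rw [Finset.sum_congr rfl fun j _ => mid j]
  simp [Finset.card_univ]
  ring

lemma T_val {x : Fin N → ℝ} (hx : x ∈ Ugood N) :
    (∑ j : Fin N, ∑ k : Fin N, ∑ l : Fin N,
        if j ≠ k ∧ j ≠ l ∧ k ≠ l then ct x j k * ct x j l else 0) * 3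
      = -((N : ℝ) * ((N : ℝ) - 1) * ((N : ℝ) - 2)) := by
  set FF : Fin N → Fin N → Fin N → ℝ :=
    fun j k l => if j ≠ k ∧ j ≠ l ∧ k ≠ l then ct x j k * ct x j l else 0 with hFF
  have hrot1 : (∑ j : Fin N, ∑ k : Fin N, ∑ l : Fin N, FF k l j)
      = ∑ j : Fin N, ∑ k : Fin N, ∑ l : Fin N, FF j k l := cube_rot FF
  have hrot2 : (∑ j : Fin N, ∑ k : Fin N, ∑ l : Fin N, FF l j k)
      = ∑ j : Fin N, ∑ k : Fin N, ∑ l : Fin N, FF k l j :=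
    cube_rot (fun j k l => FF k l j)
  have key : (∑ j : Fin N, ∑ k : Fin N, ∑ l : Fin N, FF j k l)
        + ((∑ j : Fin N, ∑ k : Fin N, ∑ l : Fin N, FF k l j)
        + (∑ j : Fin N, ∑ k : Fin N, ∑ l : Fin N, FF l j k))
      = ∑ j : Fin N, ∑ k : Fin N, ∑ l : Fin N,
          (if j ≠ k ∧ j ≠ l ∧ k ≠ l then (-1:ℝ) else 0) := by
    rw [← Finset.sum_add_distrib]
    simp only [← Finset.sum_add_distrib]
    refine Finset.sum_congr rfl fun j _ => Finset.sum_congr rfl fun k _ =>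
      Finset.sum_congr rfl fun l _ => ?_
    by_cases h : j ≠ k ∧ j ≠ l ∧ k ≠ l
    · obtain ⟨h1, h2, h3⟩ := h
      rw [hFF]
      simp only
      rw [if_pos ⟨h1, h2, h3⟩, if_pos ⟨h3, Ne.symm h1, Ne.symm h2⟩,
        if_pos ⟨Ne.symm h2, Ne.symm h3, h1⟩, if_pos ⟨h1, h2, h3⟩]
      linarith [triple_ct hx h1 h2 h3]
    · rw [hFF]
      simp only
      rw [if_neg h, if_neg, if_neg, if_neg, add_zero, add_zero]
      · exact h
      · tauto
      · tauto
  have hneg : (∑ j : Fin N, ∑ k : Fin N, ∑ l : Fin N,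
        (if j ≠ k ∧ j ≠ l ∧ k ≠ l then (-1:ℝ) else 0))
      = -((N : ℝ) * ((N : ℝ) - 1) * ((N : ℝ) - 2)) := by
    rw [← cube_count]
    simp only [← Finset.sum_neg_distrib]
    refine Finset.sum_congr rfl fun j _ => Finset.sum_congr rfl fun k _ =>
      Finset.sum_congr rfl fun l _ => ?_
    split_ifs <;> ring
  rw [hrot1, hrot2] at key
  rw [hneg] at key
  linarith

lemma Q_val (x : Fin N → ℝ) :
    (∑ j : Fin N, ∑ k ∈ Finset.univ.erase j, ct x j k ^ 2)
      = 2 * ∑ m : Fin N, ∑ n : Fin N, (if m < n then ct x m n ^ 2 else 0) := by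
  have h1 : ∀ j : Fin N, (∑ k ∈ Finset.univ.erase j, ct x j k ^ 2)
      = (∑ k : Fin N, if j < k then ct x j k ^ 2 else 0)
        + (∑ k : Fin N, if k < j then ct x j k ^ 2 else 0) :=
    fun j => erase_split j _
  rw [Finset.sum_congr rfl fun j _ => h1 j, Finset.sum_add_distrib]
  have h2 : (∑ j : Fin N, ∑ k : Fin N, if k < j then ct x j k ^ 2 else 0)
      = ∑ m : Fin N, ∑ n : Fin N, (if m < n then ct x n m ^ 2 else 0) := Finset.sum_comm
  rw [h2]
  have h3 : ∀ m n : Fin N, (if m < n then ct x n m ^ 2 else 0)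
      = (if m < n then ct x m n ^ 2 else 0) := by
    intro m n
    rw [ct_anti x m n]
    simp [neg_sq]
  rw [Finset.sum_congr rfl fun m _ => Finset.sum_congr rfl fun n _ => h3 m n]
  ring

lemma cross_term_eq (x : Fin N → ℝ) :
    (∑ j : Fin N, ∑ k ∈ Finset.univ.erase j, ∑ l ∈ (Finset.univ.erase j).erase k,
        ct x j k * ct x j l)
      = ∑ j : Fin N, ∑ k : Fin N, ∑ l : Fin N,
          if j ≠ k ∧ j ≠ l ∧ k ≠ l then ct x j k * ct x j l else 0 := by
  refine Finset.sum_congr rfl fun j _ => ?_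
  rw [sum_erase_indicator]
  refine Finset.sum_congr rfl fun k _ => ?_
  have hin : (∑ l ∈ (Finset.univ.erase j).erase k, ct x j k * ct x j l)
      = ∑ l : Fin N, if l = j then 0 else if l = k then 0 else ct x j k * ct x j l := by
    rw [sum_erase_indicator (Finset.univ.erase j) k, sum_erase_indicator]
  by_cases h : k = j
  · subst h
    simp
  · rw [if_neg h, hin]
    refine Finset.sum_congr rfl fun l _ => ?_
    split_ifs <;> tauto

lemma scalar_main {lam : ℝ} {x : Fin N → ℝ} (hx : x ∈ Ugood N) :
    -(∑ j : Fin N, (pathL1 lam x j (x j) ^ 2 + pathL2 lam x j (x j)))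
      + 2 * lam * (lam - 1) *
        (∑ m : Fin N, ∑ n : Fin N, if m < n then
          1 / (4 * Real.sin ((x m - x n) / 2) ^ 2) else 0)
      = lam ^ 2 * (N : ℝ) * ((N : ℝ) ^ 2 - 1) / 12 := by
  set SS : ℝ := ∑ m : Fin N, ∑ n : Fin N,
    (if m < n then 1 / Real.sin ((x m - x n) / 2) ^ 2 else 0) with hSS
  set T : ℝ := ∑ j : Fin N, ∑ k : Fin N, ∑ l : Fin N,
    (if j ≠ k ∧ j ≠ l ∧ k ≠ l then ct x j k * ct x j l else 0) with hT
  set P : ℝ := ∑ m : Fin N, ∑ n : Fin N, (if m < n then (1:ℝ) else 0) with hP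
  -- quarter sum equals SS/4
  have hquarter : (∑ m : Fin N, ∑ n : Fin N, if m < n then
      1 / (4 * Real.sin ((x m - x n) / 2) ^ 2) else 0) = SS / 4 := by
    rw [hSS, Finset.sum_div]
    refine Finset.sum_congr rfl fun m _ => ?_
    rw [Finset.sum_div]
    refine Finset.sum_congr rfl fun n _ => ?_
    split_ifs <;> ring
  -- sum of squares of pathL1
  have h1 : (∑ j : Fin N, pathL1 lam x j (x j) ^ 2)
      = lam ^ 2 / 4 * (2 * (SS - P) + T) := by
    have hsq : ∀ j : Fin N, pathL1 lam x j (x j) ^ 2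
        = lam ^ 2 / 4 * ((∑ k ∈ Finset.univ.erase j, ct x j k ^ 2)
          + ∑ k ∈ Finset.univ.erase j, ∑ l ∈ (Finset.univ.erase j).erase k,
              ct x j k * ct x j l) := by
      intro j
      rw [pathL1_at, mul_pow, ← sq_sum_split]
      ring
    rw [Finset.sum_congr rfl fun j _ => hsq j, ← Finset.mul_sum, Finset.sum_add_distrib]
    rw [Q_val, cross_term_eq, ← hT]
    have hctsq : (∑ m : Fin N, ∑ n : Fin N, (if m < n then ct x m n ^ 2 else 0))
        = SS - P := by
      rw [hSS, hP, ← Finset.sum_sub_distrib]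
      simp only [← Finset.sum_sub_distrib]
      refine Finset.sum_congr rfl fun m _ => Finset.sum_congr rfl fun n _ => ?_
      by_cases h : m < n
      · simp only [h, if_true]
        rw [ct_sq hx (ne_of_lt h)]
      · simp [h]
    rw [hctsq]
  -- sum of pathL2
  have h2 : (∑ j : Fin N, pathL2 lam x j (x j)) = -(lam / 2) * SS := by
    rw [pathL2_sum lam hx, hSS, Finset.mul_sum]
    refine Finset.sum_congr rfl fun m _ => ?_
    rw [Finset.mul_sum]
    refine Finset.sum_congr rfl fun n _ => ?_
    split_ifs <;> ring
  have hPv : P = (N : ℝ) * ((N : ℝ) - 1) / 2 := pair_count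
  have hTv : T * 3 = -((N : ℝ) * ((N : ℝ) - 1) * ((N : ℝ) - 2)) := T_val hx
  rw [hquarter, Finset.sum_add_distrib, h1, h2]
  linear_combination (lam ^ 2 / 2) * hPv - (lam ^ 2 / 12) * hTv

lemma exp_ratio (a b : ℝ) (h : Real.sin ((a - b) / 2) ≠ 0) :
    (Complex.exp (Complex.I * (a : ℂ)) + Complex.exp (Complex.I * (b : ℂ))) /
      (Complex.exp (Complex.I * (a : ℂ)) - Complex.exp (Complex.I * (b : ℂ)))
    = -Complex.I * ((Real.cos ((a - b) / 2) / Real.sin ((a - b) / 2) : ℝ) : ℂ) := by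
  have e1 : Complex.exp (Complex.I * (a : ℂ))
      = Complex.exp (Complex.I * (((a + b) / 2 : ℝ) : ℂ)) *
        Complex.exp ((((a - b) / 2 : ℝ) : ℂ) * Complex.I) := by
    rw [← Complex.exp_add]; congr 1; push_cast; ring
  have e2 : Complex.exp (Complex.I * (b : ℂ))
      = Complex.exp (Complex.I * (((a + b) / 2 : ℝ) : ℂ)) *
        Complex.exp (-(((a - b) / 2 : ℝ) : ℂ) * Complex.I) := by
    rw [← Complex.exp_add]; congr 1; push_cast; ring
  have f1 : Complex.exp ((((a - b) / 2 : ℝ) : ℂ) * Complex.I)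
      = (Real.cos ((a - b) / 2) : ℂ) + (Real.sin ((a - b) / 2) : ℂ) * Complex.I := by
    rw [Complex.exp_mul_I, Complex.ofReal_cos, Complex.ofReal_sin]
  have f2 : Complex.exp (-(((a - b) / 2 : ℝ) : ℂ) * Complex.I)
      = (Real.cos ((a - b) / 2) : ℂ) - (Real.sin ((a - b) / 2) : ℂ) * Complex.I := by
    rw [Complex.exp_mul_I, Complex.cos_neg, Complex.sin_neg, Complex.ofReal_cos,
      Complex.ofReal_sin]
    ring
  have hE : Complex.exp (Complex.I * (((a + b) / 2 : ℝ) : ℂ)) ≠ 0 := Complex.exp_ne_zero _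
  have hS : (Real.sin ((a - b) / 2) : ℂ) ≠ 0 := Complex.ofReal_ne_zero.mpr h
  have hnum : Complex.exp (Complex.I * (a : ℂ)) + Complex.exp (Complex.I * (b : ℂ))
      = Complex.exp (Complex.I * (((a + b) / 2 : ℝ) : ℂ)) *
          (2 * (Real.cos ((a - b) / 2) : ℂ)) := by
    rw [e1, e2, f1, f2]; ring
  have hden : Complex.exp (Complex.I * (a : ℂ)) - Complex.exp (Complex.I * (b : ℂ))
      = Complex.exp (Complex.I * (((a + b) / 2 : ℝ) : ℂ)) *
          (2 * (Real.sin ((a - b) / 2) : ℂ) * Complex.I) := by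
    rw [e1, e2, f1, f2]; ring
  have hBne : (2 * (Real.sin ((a - b) / 2) : ℂ) * Complex.I) ≠ 0 :=
    mul_ne_zero (mul_ne_zero two_ne_zero hS) Complex.I_ne_zero
  rw [hnum, hden, mul_div_mul_left _ _ hE, Complex.ofReal_div,
    div_eq_iff hBne]
  have hIsq : Complex.I * Complex.I = -1 := Complex.I_mul_I
  have hcs : ((Real.cos ((a - b) / 2) : ℂ) / (Real.sin ((a - b) / 2) : ℂ)) *
      (Real.sin ((a - b) / 2) : ℂ) = (Real.cos ((a - b) / 2) : ℂ) := div_mul_cancel₀ _ hS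
  linear_combination (2 * Complex.I * Complex.I) * hcs +
    (2 * (Real.cos ((a - b) / 2) : ℂ)) * hIsq

lemma cross_sum {x : Fin N → ℝ} (d : Fin N → ℂ) :
    (∑ m : Fin N, ∑ n : Fin N,
        if m < n then ((ct x m n : ℝ) : ℂ) * (d m - d n) else 0)
      = ∑ j : Fin N, d j * (((∑ k ∈ Finset.univ.erase j, ct x j k : ℝ) : ℝ) : ℂ) := by
  have step1 : (∑ m : Fin N, ∑ n : Fin N,
        if m < n then ((ct x m n : ℝ) : ℂ) * (d m - d n) else 0)
      = (∑ m : Fin N, (∑ n : Fin N, if m < n then ((ct x m n : ℝ) : ℂ) else 0) * d m)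
        - (∑ n : Fin N, (∑ m : Fin N, if m < n then ((ct x m n : ℝ) : ℂ) else 0) * d n) := by
    have swap : (∑ n : Fin N, (∑ m : Fin N, if m < n then ((ct x m n : ℝ) : ℂ) else 0) * d n)
        = ∑ m : Fin N, ∑ n : Fin N, (if m < n then ((ct x m n : ℝ) : ℂ) else 0) * d n := by
      rw [Finset.sum_comm]
      exact Finset.sum_congr rfl fun n _ => by rw [Finset.sum_mul]
    rw [swap, ← Finset.sum_sub_distrib]
    refine Finset.sum_congr rfl fun m _ => ?_
    rw [Finset.sum_mul, ← Finset.sum_sub_distrib]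
    refine Finset.sum_congr rfl fun n _ => ?_
    split_ifs <;> ring
  rw [step1, ← Finset.sum_sub_distrib]
  refine Finset.sum_congr rfl fun j _ => ?_
  have hcast : ((∑ k ∈ Finset.univ.erase j, ct x j k : ℝ) : ℂ)
      = (∑ k : Fin N, if j < k then ((ct x j k : ℝ) : ℂ) else 0)
        + (∑ k : Fin N, if k < j then ((ct x j k : ℝ) : ℂ) else 0) := by
    rw [erase_split j]
    push_cast
    congr 1 <;> exact Finset.sum_congr rfl fun k _ => by split_ifs <;> simp
  rw [hcast]
  have hanti : (∑ m : Fin N, if m < j then ((ct x m j : ℝ) : ℂ) else 0)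
      = - ∑ k : Fin N, if k < j then ((ct x j k : ℝ) : ℂ) else 0 := by
    rw [← Finset.sum_neg_distrib]
    refine Finset.sum_congr rfl fun m _ => ?_
    rw [ct_anti x j m]
    push_cast
    split_ifs <;> ring
  rw [hanti]
  ring

/-- Conjugation of the Sutherland Hamiltonian by the ground state:
`(1/Ψ₀) H(Φ Ψ₀) - E₀ Φ = H' Φ`, where
`H' = -∑_j ∂²/∂x_j² - iλ ∑_{j<k} ((e^{ix_j}+e^{ix_k})/(e^{ix_j}-e^{ix_k}))(∂_j - ∂_k)`
and `E₀ = λ² N (N²-1)/12`, for `Φ` smooth on the region where `Ψ₀ > 0`. -/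
theorem stmt_8 (N : ℕ) (hN : 2 ≤ N) (lam : ℝ) (hlam : 0 < lam)
    (U : Set (Fin N → ℝ))
    (hU : U = {y : Fin N → ℝ | ∀ j k : Fin N, j < k → 0 < Real.sin ((y j - y k) / 2)})
    (Φ : (Fin N → ℝ) → ℂ) (hΦ : ContDiffOn ℝ (⊤ : ℕ∞) Φ U)
    (x : Fin N → ℝ) (hx : x ∈ U) :
    let Ψ : (Fin N → ℝ) → ℝ := fun y =>
      ∏ j : Fin N, ∏ k : Fin N, if j < k then Real.sin ((y j - y k) / 2) ^ lam else 1
    let HΦΨ : ℂ :=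
      -(∑ j : Fin N, deriv (deriv (fun s =>
            Φ (Function.update x j s) * (Ψ (Function.update x j s) : ℂ))) (x j))
        + ((2 * lam * (lam - 1) : ℝ) : ℂ) *
          (∑ j : Fin N, ∑ k : Fin N,
            if j < k then (1 / (4 * (Real.sin ((x j - x k) / 2) : ℂ) ^ 2)) else 0)
          * (Φ x * (Ψ x : ℂ))
    ((1 / (Ψ x : ℂ)) * HΦΨ - ((lam ^ 2 * (N : ℝ) * ((N : ℝ) ^ 2 - 1) / 12 : ℝ) : ℂ) * Φ x
      = -(∑ j : Fin N, deriv (deriv (fun s => Φ (Function.update x j s))) (x j))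
        - Complex.I * (lam : ℂ) *
          ∑ j : Fin N, ∑ k : Fin N,
            if j < k then
              ((Complex.exp (Complex.I * (x j : ℂ)) + Complex.exp (Complex.I * (x k : ℂ))) /
               (Complex.exp (Complex.I * (x j : ℂ)) - Complex.exp (Complex.I * (x k : ℂ)))) *
                (deriv (fun s => Φ (Function.update x j s)) (x j)
                  - deriv (fun s => Φ (Function.update x k s)) (x k))
            else 0) := by
  intro Ψ HΦΨ
  have hxg : x ∈ Ugood N := by rw [hU] at hx; exact hx
  have hΦg : ContDiffOn ℝ (⊤ : ℕ∞) Φ (Ugood N) := by rw [hU] at hΦ; exact hΦ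
  have hΨfun : Ψ = PsiD lam := rfl
  have hHdef : HΦΨ =
      -(∑ j : Fin N, deriv (deriv (fun s =>
            Φ (Function.update x j s) * (PsiD lam (Function.update x j s) : ℂ))) (x j))
        + ((2 * lam * (lam - 1) : ℝ) : ℂ) *
          (∑ j : Fin N, ∑ k : Fin N,
            if j < k then (1 / (4 * (Real.sin ((x j - x k) / 2) : ℂ) ^ 2)) else 0)
          * (Φ x * (PsiD lam x : ℂ)) := rfl
  rw [hHdef, hΨfun]
  have hsum1 : (∑ j : Fin N, deriv (deriv (fun s =>
        Φ (Function.update x j s) * (PsiD lam (Function.update x j s) : ℂ))) (x j))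
      = ∑ j : Fin N,
          (deriv (deriv (fun s => Φ (Function.update x j s))) (x j) * (PsiD lam x : ℂ)
            + deriv (fun s => Φ (Function.update x j s)) (x j) *
                ((2 * PsiD lam x * pathL1 lam x j (x j) : ℝ) : ℂ)
            + Φ x * ((PsiD lam x * (pathL1 lam x j (x j) ^ 2 + pathL2 lam x j (x j)) : ℝ) : ℂ)) :=
    Finset.sum_congr rfl fun j _ => deriv2_mul hxg hΦg j
  rw [hsum1, Finset.sum_add_distrib, Finset.sum_add_distrib]
  rw [← Finset.sum_mul]
  have hA : (∑ j : Fin N, deriv (fun s => Φ (Function.update x j s)) (x j) *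
        ((2 * PsiD lam x * pathL1 lam x j (x j) : ℝ) : ℂ))
      = (PsiD lam x : ℂ) * ((lam : ℂ) *
          ∑ j : Fin N, deriv (fun s => Φ (Function.update x j s)) (x j) *
            (((∑ k ∈ Finset.univ.erase j, ct x j k : ℝ) : ℝ) : ℂ)) := by
    rw [Finset.mul_sum, Finset.mul_sum]
    refine Finset.sum_congr rfl fun j _ => ?_
    rw [pathL1_at]
    push_cast
    ring
  rw [hA]
  have hB : (∑ j : Fin N, Φ x *
        ((PsiD lam x * (pathL1 lam x j (x j) ^ 2 + pathL2 lam x j (x j)) : ℝ) : ℂ))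
      = Φ x * (PsiD lam x : ℂ) *
          ((∑ j : Fin N, (pathL1 lam x j (x j) ^ 2 + pathL2 lam x j (x j)) : ℝ) : ℂ) := by
    push_cast
    rw [Finset.mul_sum]
    refine Finset.sum_congr rfl fun j _ => ?_
    ring
  rw [hB]
  have hSc : (∑ j : Fin N, ∑ k : Fin N,
        if j < k then (1 / (4 * (Real.sin ((x j - x k) / 2) : ℂ) ^ 2)) else 0)
      = ((∑ m : Fin N, ∑ n : Fin N,
          if m < n then 1 / (4 * Real.sin ((x m - x n) / 2) ^ 2) else (0:ℝ) : ℝ) : ℂ) := by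
    push_cast
    refine Finset.sum_congr rfl fun m _ => Finset.sum_congr rfl fun n _ => ?_
    split_ifs <;> push_cast <;> ring
  rw [hSc]
  have hcross : (∑ j : Fin N, ∑ k : Fin N,
        if j < k then
          ((Complex.exp (Complex.I * (x j : ℂ)) + Complex.exp (Complex.I * (x k : ℂ))) /
           (Complex.exp (Complex.I * (x j : ℂ)) - Complex.exp (Complex.I * (x k : ℂ)))) *
            (deriv (fun s => Φ (Function.update x j s)) (x j)
              - deriv (fun s => Φ (Function.update x k s)) (x k))
        else 0)
      = -Complex.I * ∑ j : Fin N, deriv (fun s => Φ (Function.update x j s)) (x j) *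
          (((∑ k ∈ Finset.univ.erase j, ct x j k : ℝ) : ℝ) : ℂ) := by
    have h1 : ∀ m n : Fin N, m < n →
        ((Complex.exp (Complex.I * (x m : ℂ)) + Complex.exp (Complex.I * (x n : ℂ))) /
         (Complex.exp (Complex.I * (x m : ℂ)) - Complex.exp (Complex.I * (x n : ℂ))))
          = -Complex.I * ((ct x m n : ℝ) : ℂ) := by
      intro m n h
      exact exp_ratio (x m) (x n) (sin_ne hxg (ne_of_lt h))
    have step : (∑ j : Fin N, ∑ k : Fin N,
        if j < k then
          ((Complex.exp (Complex.I * (x j : ℂ)) + Complex.exp (Complex.I * (x k : ℂ))) /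
           (Complex.exp (Complex.I * (x j : ℂ)) - Complex.exp (Complex.I * (x k : ℂ)))) *
            (deriv (fun s => Φ (Function.update x j s)) (x j)
              - deriv (fun s => Φ (Function.update x k s)) (x k))
        else 0)
        = ∑ m : Fin N, ∑ n : Fin N,
            if m < n then (-Complex.I) * (((ct x m n : ℝ) : ℂ) *
              (deriv (fun s => Φ (Function.update x m s)) (x m)
                - deriv (fun s => Φ (Function.update x n s)) (x n))) else 0 := by
      refine Finset.sum_congr rfl fun m _ => Finset.sum_congr rfl fun n _ => ?_
      by_cases h : m < n
      · rw [if_pos h, if_pos h, h1 m n h]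
        ring
      · rw [if_neg h, if_neg h]
    rw [step]
    have fact : ∀ m n : Fin N, (if m < n then (-Complex.I) * (((ct x m n : ℝ) : ℂ) *
        (deriv (fun s => Φ (Function.update x m s)) (x m)
          - deriv (fun s => Φ (Function.update x n s)) (x n))) else 0)
        = (-Complex.I) * (if m < n then ((ct x m n : ℝ) : ℂ) *
            (deriv (fun s => Φ (Function.update x m s)) (x m)
              - deriv (fun s => Φ (Function.update x n s)) (x n)) else 0) := by
      intro m n; split_ifs <;> ring
    rw [Finset.sum_congr rfl fun m _ => Finset.sum_congr rfl fun n _ => fact m n]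
    simp only [← Finset.mul_sum]
    rw [cross_sum (fun j => deriv (fun s => Φ (Function.update x j s)) (x j))]
  rw [hcross]
  -- scalar identity, cast to ℂ
  have hYr : (∑ j : Fin N, (pathL1 lam x j (x j) ^ 2 + pathL2 lam x j (x j)))
      = (2 * lam * (lam - 1)) *
          (∑ m : Fin N, ∑ n : Fin N,
            if m < n then 1 / (4 * Real.sin ((x m - x n) / 2) ^ 2) else (0:ℝ))
        - lam ^ 2 * (N : ℝ) * ((N : ℝ) ^ 2 - 1) / 12 := by
    linarith [scalar_main (lam := lam) hxg]
  have hYc : ((∑ j : Fin N, (pathL1 lam x j (x j) ^ 2 + pathL2 lam x j (x j)) : ℝ) : ℂ)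
      = ((2 * lam * (lam - 1) : ℝ) : ℂ) *
          ((∑ m : Fin N, ∑ n : Fin N,
            if m < n then 1 / (4 * Real.sin ((x m - x n) / 2) ^ 2) else (0:ℝ) : ℝ) : ℂ)
        - ((lam ^ 2 * (N : ℝ) * ((N : ℝ) ^ 2 - 1) / 12 : ℝ) : ℂ) := by
    rw [hYr, Complex.ofReal_sub, Complex.ofReal_mul]
  have hPne : ((PsiD lam x : ℝ) : ℂ) ≠ 0 := by
    exact_mod_cast (psi_pos (lam := lam) hxg).ne'
  have hp1 : (1 / ((PsiD lam x : ℝ) : ℂ)) * ((PsiD lam x : ℝ) : ℂ) = 1 :=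
    one_div_mul_cancel hPne
  have hI : Complex.I * Complex.I = -1 := Complex.I_mul_I
  set S2 : ℂ := ∑ j : Fin N, deriv (deriv (fun s => Φ (Function.update x j s))) (x j) with hS2
  set W : ℂ := ∑ j : Fin N, deriv (fun s => Φ (Function.update x j s)) (x j) *
      (((∑ k ∈ Finset.univ.erase j, ct x j k : ℝ) : ℝ) : ℂ) with hW
  linear_combination
    (-S2 - (lam : ℂ) * W - Φ x * ((∑ j : Fin N,
        (pathL1 lam x j (x j) ^ 2 + pathL2 lam x j (x j)) : ℝ) : ℂ)
      + ((2 * lam * (lam - 1) : ℝ) : ℂ) * ((∑ m : Fin N, ∑ n : Fin N,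
          if m < n then 1 / (4 * Real.sin ((x m - x n) / 2) ^ 2) else (0:ℝ) : ℝ) : ℂ) * Φ x) * hp1
    + (-(lam : ℂ) * W) * hI
    + (-(Φ x)) * hYc
end

section
/- The monomial symmetric function basis is triangular for D: for every partition n, D·M_n = ∑_{m ≤ n} b_{n,m} M_m for some coefficients b_{n,m}, where M_m(z) = ∑_{P ∈ S_N} ∏_j z_j^{m_{Pj}} and m ≤ n is the dominance order (equal total degree, partial sums of m bounded by those of n). -/
/-!
Write `M_e(z) = ∑_σ z^(e ∘ σ)`. Since `z_j ∂_j z^e = e_j z^e`, the second-order part of `D`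
multiplies `M_n` by `∑_j n_j (n_j - 1)`. In the first-order part, the four terms indexed by
`(σ, j, k)`, `(σ, k, j)`, `(σ ∘ (j k), j, k)` and `(σ ∘ (j k), k, j)` add up to a polynomial: with
`a = n (σ j)` and `b = n (σ k)` it is a combination of `z_j^(min a b + t) z_k^(max a b - t)`,
`0 ≤ t ≤ |a - b|`, times the untouched variables. Reindexing by `p = σ j`, `q = σ k` turns this
into a combination of the `M_m` where `m` arises from `n` by a Robin Hood transfer, replacing
`(n_p, n_q)` by `(min + t, max - t)`. Such an `m` has the degree of `n`, and any `s` of its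
entries add up to at most the `s` largest entries of `n`, so its decreasing rearrangement is
dominated by `n`.
-/

open Finset Function

namespace Sutherland

variable {N : ℕ}

lemma sum_le_sum_prefix {M : Type*} [AddCommMonoid M] [PartialOrder M] [IsOrderedAddMonoid M]
    {n : Fin N → M} (hn : Antitone n) (S : Finset (Fin N)) :
    ∑ k ∈ S, n k ≤ ∑ k ∈ univ.filter (fun k : Fin N => (k : ℕ) < #S), n k := by
  induction S using Finset.induction_on_max with
  | empty => simp
  | insert a S hlt ih =>
    have ha : a ∉ S := fun h => lt_irrefl a (hlt a h)
    have hcard : #S ≤ a := by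
      simpa using card_le_card (fun x hx => mem_Iio.mpr (hlt x hx) : S ⊆ Iio a)
    set c : Fin N := ⟨#S, hcard.trans_lt a.isLt⟩
    have hprefix : univ.filter (fun k : Fin N => (k : ℕ) < #S + 1)
        = insert c (univ.filter (fun k : Fin N => (k : ℕ) < #S)) := by
      ext k
      simp only [Order.lt_add_one_iff, mem_filter, mem_univ, true_and, mem_insert, Fin.ext_iff, c]
      omega
    rw [sum_insert ha, card_insert_of_notMem ha, hprefix, sum_insert (by simp [c])]
    exact add_le_add (hn (show c ≤ a from hcard)) ih

lemma sum_prefix_comp_perm_le {M : Type*} [AddCommMonoid M] [LE M] {e n : Fin N → M}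
    (he : ∀ S : Finset (Fin N),
      ∑ k ∈ S, e k ≤ ∑ k ∈ univ.filter (fun k : Fin N => (k : ℕ) < #S), n k)
    (σ : Equiv.Perm (Fin N)) (j : Fin N) :
    ∑ k ∈ univ.filter (fun k => k ≤ j), e (σ k) ≤ ∑ k ∈ univ.filter (fun k => k ≤ j), n k := by
  have hprefix : univ.filter (fun k : Fin N => (k : ℕ) < #(univ.filter (fun k => k ≤ j)))
      = univ.filter (fun k => k ≤ j) := by
    rw [filter_ge_eq_Iic, Fin.card_Iic]
    ext k
    simp only [mem_filter, mem_univ, true_and, mem_Iic, Fin.le_def]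
    omega
  have := he ((univ.filter (fun k => k ≤ j)).map σ.toEmbedding)
  rwa [sum_map, card_map, hprefix] at this

def antitoneSort (e : Fin N → ℕ) : Equiv.Perm (Fin N) := Fin.revPerm.trans (Tuple.sort e)

lemma antitone_comp_antitoneSort (e : Fin N → ℕ) : Antitone (e ∘ antitoneSort e) :=
  (Tuple.monotone_sort e).comp_antitone Fin.rev_anti

lemma sum_erase_add_ite {ι M : Type*} [AddCommMonoid M] [DecidableEq ι] (S : Finset ι)
    (f : ι → M) (a : ι) : ∑ x ∈ S.erase a, f x + (if a ∈ S then f a else 0) = ∑ x ∈ S, f x := by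
  split_ifs with ha
  · exact sum_erase_add S f ha
  · rw [erase_eq_of_notMem ha, add_zero]

lemma sum_eq_sum_erase_erase_add {ι M : Type*} [AddCommMonoid M] [DecidableEq ι] (S : Finset ι)
    (f : ι → M) {p q : ι} (hpq : p ≠ q) :
    ∑ x ∈ S, f x = ∑ x ∈ (S.erase p).erase q, f x
      + (if p ∈ S then f p else 0) + (if q ∈ S then f q else 0) := by
  rw [← sum_erase_add_ite S f p, ← sum_erase_add_ite (S.erase p) f q]
  simp only [mem_erase, ne_eq, hpq.symm, not_false_eq_true, true_and]
  abel

def robinHood (n : Fin N → ℕ) (p q : Fin N) (t : ℕ) : Fin N → ℕ :=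
  update (update n p (min (n p) (n q) + t)) q (max (n p) (n q) - t)

section RobinHood

variable (n : Fin N → ℕ) {p q : Fin N} (t : ℕ)

lemma robinHood_apply_left (hpq : p ≠ q) : robinHood n p q t p = min (n p) (n q) + t := by
  simp [robinHood, hpq]

lemma robinHood_apply_right : robinHood n p q t q = max (n p) (n q) - t := by
  simp [robinHood]

lemma robinHood_apply_of_ne {l : Fin N} (hp : l ≠ p) (hq : l ≠ q) :
    robinHood n p q t l = n l := by
  simp [robinHood, hp, hq]

lemma sum_robinHood (hpq : p ≠ q) (ht : t ≤ max (n p) (n q) - min (n p) (n q)) :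
    ∑ l, robinHood n p q t l = ∑ l, n l := by
  rw [sum_eq_sum_erase_erase_add univ _ hpq, sum_eq_sum_erase_erase_add univ n hpq,
    sum_congr rfl fun l hl => robinHood_apply_of_ne n t (ne_of_mem_erase (mem_of_mem_erase hl))
      (ne_of_mem_erase hl),
    robinHood_apply_left n t hpq, robinHood_apply_right]
  simp only [mem_univ, if_true]
  omega

lemma sum_robinHood_le_or (hpq : p ≠ q) (ht : t ≤ max (n p) (n q) - min (n p) (n q))
    (S : Finset (Fin N)) :
    ∑ l ∈ S, robinHood n p q t l ≤ ∑ l ∈ S, n l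
      ∨ ∑ l ∈ S, robinHood n p q t l ≤ ∑ l ∈ S, n (Equiv.swap p q l) := by
  have hrest : ∀ f : Fin N → ℕ, (∀ l, l ≠ p → l ≠ q → f l = n l) →
      ∑ l ∈ (S.erase p).erase q, f l = ∑ l ∈ (S.erase p).erase q, n l := fun f hf =>
    sum_congr rfl fun l hl => hf l (ne_of_mem_erase (mem_of_mem_erase hl)) (ne_of_mem_erase hl)
  rw [sum_eq_sum_erase_erase_add S _ hpq, sum_eq_sum_erase_erase_add S n hpq,
    sum_eq_sum_erase_erase_add S (fun l => n (Equiv.swap p q l)) hpq,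
    hrest _ fun l => robinHood_apply_of_ne n t,
    hrest (fun l => n (Equiv.swap p q l)) fun l hp hq => by
      rw [Equiv.swap_apply_of_ne_of_ne hp hq],
    robinHood_apply_left n t hpq, robinHood_apply_right, Equiv.swap_apply_left,
    Equiv.swap_apply_right]
  split_ifs <;> omega

lemma sum_robinHood_le_sum_prefix (hn : Antitone n) (hpq : p ≠ q)
    (ht : t ≤ max (n p) (n q) - min (n p) (n q)) (S : Finset (Fin N)) :
    ∑ l ∈ S, robinHood n p q t l ≤ ∑ k ∈ univ.filter (fun k : Fin N => (k : ℕ) < #S), n k := by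
  rcases sum_robinHood_le_or n t hpq ht S with h | h
  · exact h.trans (sum_le_sum_prefix hn S)
  · have hswap := sum_le_sum_prefix hn (S.map (Equiv.swap p q).toEmbedding)
    rw [sum_map, card_map] at hswap
    exact h.trans hswap

end RobinHood

lemma sum_sum_sum_comm {α β γ M : Type*} [Fintype α] [Fintype β] [Fintype γ] [AddCommMonoid M]
    (f : α → β → γ → M) : ∑ a, ∑ b, ∑ c, f a b c = ∑ b, ∑ c, ∑ a, f a b c := by
  rw [sum_comm]
  exact sum_congr rfl fun b _ => sum_comm

section PermSums

variable {ι M : Type*} [Fintype ι] [DecidableEq ι] [AddCommMonoid M]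

lemma sum_perm_symmetrize (T : Equiv.Perm ι → ι → ι → M) :
    4 • ∑ σ, ∑ j, ∑ k, T σ j k = ∑ σ, ∑ j, ∑ k,
      (T σ j k + T σ k j + T (σ * Equiv.swap j k) j k + T (σ * Equiv.swap j k) k j) := by
  have hswap : ∀ f : ι → ι → Equiv.Perm ι → M,
      ∑ σ, ∑ j, ∑ k, f j k (σ * Equiv.swap j k) = ∑ σ, ∑ j, ∑ k, f j k σ := fun f => by
    rw [sum_sum_sum_comm (fun σ j k => f j k (σ * Equiv.swap j k)),
      sum_sum_sum_comm (fun σ j k => f j k σ)]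
    exact sum_congr rfl fun j _ => sum_congr rfl fun k _ =>
      Equiv.sum_comp (Equiv.mulRight (Equiv.swap j k)) (f j k)
  simp only [sum_add_distrib, hswap (fun j k σ => T σ j k), hswap (fun j k σ => T σ k j)]
  rw [sum_congr rfl fun σ _ => sum_comm (f := fun j k => T σ k j)]
  abel

lemma sum_perm_sum_sum_apply (F : ι → ι → Equiv.Perm ι → M) :
    ∑ σ : Equiv.Perm ι, ∑ j, ∑ k, F (σ j) (σ k) σ = ∑ p, ∑ q, ∑ σ, F p q σ := by
  rw [← sum_sum_sum_comm (fun σ p q => F p q σ)]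
  exact sum_congr rfl fun σ _ => (Equiv.sum_comp σ _).trans
    (sum_congr rfl fun p _ => Equiv.sum_comp σ (fun q => F p q σ))

end PermSums

def pairCoeff (a b t : ℕ) : ℕ :=
  (max a b - min a b) + (if t = 0 then min a b else 0)
    + (if t = max a b - min a b then min a b else 0)

lemma pairCoeff_comm (a b t : ℕ) : pairCoeff a b t = pairCoeff b a t := by
  simp only [pairCoeff, max_comm a b, min_comm a b]

lemma pair_identity {K : Type*} [Field K] (a b : ℕ) {x y : K} (hxy : x ≠ y) :
    x / (x - y) * (a * (x ^ a * y ^ b)) + y / (y - x) * (b * (x ^ a * y ^ b))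
      + x / (x - y) * (b * (x ^ b * y ^ a)) + y / (y - x) * (a * (x ^ b * y ^ a))
      = ∑ t ∈ range (max a b - min a b + 1),
          (pairCoeff a b t : K) * (x ^ (min a b + t) * y ^ (max a b - t)) := by
  wlog hba : b ≤ a generalizing a b
  · have := this b a (le_of_not_ge hba)
    simp only [pairCoeff_comm b a, max_comm b a, min_comm b a] at this
    rw [← this]
    ring
  obtain ⟨d, rfl⟩ := Nat.exists_eq_add_of_le hba
  simp only [pairCoeff, max_eq_left hba, min_eq_right hba, Nat.add_sub_cancel_left]
  -- `(x - y)` times this is `x^b y^b (d (x^(d+1) - y^(d+1)) + b (x - y) (x^d + y^d))`, which is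
  -- the numerator of the left-hand side over `x - y`
  have hsum : ∑ t ∈ range (d + 1), (((d + (if t = 0 then b else 0) + (if t = d then b else 0) : ℕ)
        : K) * (x ^ (b + t) * y ^ (b + d - t)))
      = d * (x ^ b * y ^ b * ∑ t ∈ range (d + 1), x ^ t * y ^ (d - t))
        + b * (x ^ b * y ^ (b + d)) + b * (x ^ (b + d) * y ^ b) := by
    simp only [Nat.cast_add, Nat.cast_ite, Nat.cast_zero, add_mul, sum_add_distrib, ite_mul,
      zero_mul, sum_ite_eq', mem_range, Nat.lt_succ_iff, zero_le, le_refl, if_true, add_zero,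
      Nat.sub_zero, Nat.add_sub_cancel]
    congr 2
    rw [mul_sum, mul_sum]
    refine sum_congr rfl fun t ht => ?_
    rw [show b + d - t = b + (d - t) by have := mem_range.mp ht; omega]
    ring
  have hgeom := geom_sum₂_mul x y (d + 1)
  simp only [Nat.add_sub_cancel] at hgeom
  have hxy' : x - y ≠ 0 := sub_ne_zero.mpr hxy
  have hyx' : y - x ≠ 0 := sub_ne_zero.mpr hxy.symm
  rw [hsum]
  field_simp
  push_cast
  linear_combination (d : K) * x ^ b * y ^ b * (x - y) * hgeom

noncomputable section

variable {𝕜 : Type*} [NontriviallyNormedField 𝕜]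

def monomial (e : Fin N → ℕ) (w : Fin N → 𝕜) : 𝕜 := ∏ l, w l ^ e l

def monomialSymm (e : Fin N → ℕ) (w : Fin N → 𝕜) : 𝕜 :=
  ∑ σ : Equiv.Perm (Fin N), monomial (e ∘ σ) w

def partialDeriv (g : (Fin N → 𝕜) → 𝕜) (j : Fin N) (w : Fin N → 𝕜) : 𝕜 :=
  deriv (fun s => g (update w j s)) (w j)

section Monomial

variable (e : Fin N → ℕ) (w : Fin N → 𝕜) (j : Fin N)

lemma monomial_eq_pow_mul_prod_erase :
    monomial e w = w j ^ e j * ∏ l ∈ univ.erase j, w l ^ e l :=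
  (mul_prod_erase univ _ (mem_univ j)).symm

lemma monomial_eq_pow_mul_pow_mul_prod {k : Fin N} (hjk : j ≠ k) :
    monomial e w = w j ^ e j * w k ^ e k * ∏ l ∈ (univ.erase j).erase k, w l ^ e l := by
  rw [monomial_eq_pow_mul_prod_erase e w j,
    ← mul_prod_erase _ _ (mem_erase.mpr ⟨hjk.symm, mem_univ k⟩), mul_assoc]

lemma monomial_update_point (s : 𝕜) :
    monomial e (update w j s) = s ^ e j * ∏ l ∈ univ.erase j, w l ^ e l := by
  rw [monomial_eq_pow_mul_prod_erase _ _ j, update_self]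
  exact congrArg _ (prod_congr rfl fun l hl => by rw [update_of_ne (ne_of_mem_erase hl)])

lemma monomial_update_exponent (a : ℕ) :
    monomial (update e j a) w = w j ^ a * ∏ l ∈ univ.erase j, w l ^ e l := by
  rw [monomial_eq_pow_mul_prod_erase _ _ j, update_self]
  exact congrArg _ (prod_congr rfl fun l hl => by rw [update_of_ne (ne_of_mem_erase hl)])

lemma mul_pow_mul_monomial_update_sub {c : 𝕜} {k : ℕ} (hc : e j < k → c = 0) :
    c * (w j ^ k * monomial (update e j (e j - k)) w) = c * monomial e w := by
  rcases lt_or_ge (e j) k with h | h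
  · simp [hc h]
  · rw [monomial_update_exponent, monomial_eq_pow_mul_prod_erase e w j, ← mul_assoc (w j ^ k),
      ← pow_add, Nat.add_sub_cancel' h]

lemma partialDeriv_sum_monomial {ι : Type*} (s : Finset ι) (c : ι → 𝕜) (E : ι → Fin N → ℕ) :
    partialDeriv (fun w => ∑ i ∈ s, c i * monomial (E i) w) j w
      = ∑ i ∈ s, c i * E i j * monomial (update (E i) j (E i j - 1)) w := by
  simp only [partialDeriv, monomial_update_point]
  rw [deriv_fun_sum fun i _ => by fun_prop]
  refine sum_congr rfl fun i _ => ?_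
  rw [deriv_const_mul _ (by fun_prop), deriv_mul_const (by fun_prop), deriv_pow_field,
    monomial_update_exponent]
  ring

lemma monomialSymm_eq_sum_one_mul :
    monomialSymm e = fun w : Fin N → 𝕜 => ∑ σ : Equiv.Perm (Fin N), 1 * monomial (e ∘ σ) w := by
  funext w
  simp only [monomialSymm, one_mul]

lemma mul_partialDeriv_monomialSymm :
    w j * partialDeriv (monomialSymm e) j w
      = ∑ σ : Equiv.Perm (Fin N), (e (σ j) : 𝕜) * monomial (e ∘ σ) w := by
  rw [monomialSymm_eq_sum_one_mul, partialDeriv_sum_monomial, mul_sum]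
  refine sum_congr rfl fun σ _ => ?_
  rw [← mul_pow_mul_monomial_update_sub (e ∘ σ) w j (k := 1) fun h => by simp_all]
  simp only [comp_apply, pow_one]
  ring

lemma sq_mul_partialDeriv_partialDeriv_monomialSymm :
    w j ^ 2 * partialDeriv (partialDeriv (monomialSymm e) j) j w
      = ∑ σ : Equiv.Perm (Fin N), ((e (σ j) * (e (σ j) - 1) : ℕ) : 𝕜) * monomial (e ∘ σ) w := by
  have hfirst : partialDeriv (monomialSymm e) j = fun w : Fin N → 𝕜 => ∑ σ : Equiv.Perm (Fin N),
      (e (σ j) : 𝕜) * monomial (update (e ∘ σ) j (e (σ j) - 1)) w := by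
    ext w
    rw [monomialSymm_eq_sum_one_mul, partialDeriv_sum_monomial]
    simp only [comp_apply, one_mul]
  rw [hfirst, partialDeriv_sum_monomial, mul_sum]
  refine sum_congr rfl fun σ _ => ?_
  rw [← mul_pow_mul_monomial_update_sub (e ∘ σ) w j (k := 2) fun h => by
    interval_cases h : (e ∘ σ) j <;> simp_all]
  simp only [update_self, update_idem, comp_apply, Nat.sub_sub]
  push_cast
  ring

lemma sum_sq_mul_partialDeriv_partialDeriv_monomialSymm :
    ∑ j, w j ^ 2 * partialDeriv (partialDeriv (monomialSymm e) j) j w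
      = ((∑ j, e j * (e j - 1) : ℕ) : 𝕜) * monomialSymm e w := by
  simp_rw [sq_mul_partialDeriv_partialDeriv_monomialSymm]
  rw [sum_comm, monomialSymm, mul_sum]
  refine sum_congr rfl fun σ _ => ?_
  rw [← sum_mul, ← Equiv.sum_comp σ (fun j => e j * (e j - 1)), Nat.cast_sum]

lemma monomialSymm_comp_perm (τ : Equiv.Perm (Fin N)) :
    monomialSymm (e ∘ τ) w = monomialSymm e w :=
  Equiv.sum_comp (Equiv.mulLeft τ) (fun σ => monomial (e ∘ σ) w)

end Monomial

def pairTerm (e : Fin N → ℕ) (w : Fin N → 𝕜) (σ : Equiv.Perm (Fin N)) (j k : Fin N) : 𝕜 :=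
  w j / (w j - w k) * (e (σ j) * monomial (e ∘ σ) w)

lemma sum_sum_div_mul_partialDeriv_monomialSymm (e : Fin N → ℕ) (w : Fin N → 𝕜) :
    ∑ j, ∑ k, (if j ≠ k then w j ^ 2 / (w j - w k) * partialDeriv (monomialSymm e) j w else 0)
      = ∑ σ, ∑ j, ∑ k, pairTerm e w σ j k := by
  have hterm : ∀ j k, (if j ≠ k then w j ^ 2 / (w j - w k) * partialDeriv (monomialSymm e) j w
      else 0) = ∑ σ, pairTerm e w σ j k := fun j k => by
    -- for `j = k` both sides vanish, as `w j / 0 = 0`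
    rw [ite_eq_left_iff.mpr fun h => by simp [not_not.mp h],
      show w j ^ 2 / (w j - w k) * partialDeriv (monomialSymm e) j w
        = w j / (w j - w k) * (w j * partialDeriv (monomialSymm e) j w) by ring,
      mul_partialDeriv_monomialSymm, mul_sum]
    rfl
  simp_rw [hterm]
  exact (sum_sum_sum_comm _).symm

lemma pairTerm_symmetrized (e : Fin N → ℕ) {w : Fin N → 𝕜} (σ : Equiv.Perm (Fin N))
    {j k : Fin N} (hjk : j ≠ k) (hw : w j ≠ w k) :
    pairTerm e w σ j k + pairTerm e w σ k j + pairTerm e w (σ * Equiv.swap j k) j k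
        + pairTerm e w (σ * Equiv.swap j k) k j
      = ∑ t ∈ range (max (e (σ j)) (e (σ k)) - min (e (σ j)) (e (σ k)) + 1),
          (pairCoeff (e (σ j)) (e (σ k)) t : 𝕜)
            * monomial (robinHood e (σ j) (σ k) t ∘ σ) w := by
  set R := ∏ l ∈ (univ.erase j).erase k, w l ^ e (σ l)
  have hR : ∀ f : Fin N → ℕ, (∀ l, l ≠ j → l ≠ k → f l = e (σ l)) →
      monomial f w = w j ^ f j * w k ^ f k * R := fun f hf => by
    rw [monomial_eq_pow_mul_pow_mul_prod f w j hjk]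
    exact congrArg _ (prod_congr rfl fun l hl =>
      by rw [hf l (ne_of_mem_erase (mem_of_mem_erase hl)) (ne_of_mem_erase hl)])
  have hswap : e ∘ ⇑(σ * Equiv.swap j k) = e ∘ σ ∘ Equiv.swap j k := rfl
  have hmono := hR (e ∘ σ) fun l _ _ => rfl
  have hmono_swap := hR (e ∘ σ ∘ Equiv.swap j k) fun l hj hk => by
    simp [Equiv.swap_apply_of_ne_of_ne hj hk]
  calc _ = (w j / (w j - w k) * (e (σ j) * (w j ^ e (σ j) * w k ^ e (σ k)))
        + w k / (w k - w j) * (e (σ k) * (w j ^ e (σ j) * w k ^ e (σ k)))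
        + w j / (w j - w k) * (e (σ k) * (w j ^ e (σ k) * w k ^ e (σ j)))
        + w k / (w k - w j) * (e (σ j) * (w j ^ e (σ k) * w k ^ e (σ j)))) * R := by
        simp only [pairTerm, hswap, hmono, hmono_swap, comp_apply, Equiv.Perm.mul_apply,
          Equiv.swap_apply_left, Equiv.swap_apply_right]
        ring
    _ = _ := by
      rw [pair_identity _ _ hw, sum_mul]
      refine sum_congr rfl fun t _ => ?_
      rw [hR (robinHood e (σ j) (σ k) t ∘ σ) fun l hj hk =>
          robinHood_apply_of_ne e t (σ.injective.ne hj) (σ.injective.ne hk),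
        comp_apply, comp_apply, robinHood_apply_left e t (σ.injective.ne hjk),
        robinHood_apply_right]
      ring

lemma four_mul_sum_pairTerm (e : Fin N → ℕ) {w : Fin N → 𝕜} (hw : Injective w) :
    4 * ∑ σ, ∑ j, ∑ k, pairTerm e w σ j k
      = ∑ p, ∑ q, if p ≠ q then ∑ t ∈ range (max (e p) (e q) - min (e p) (e q) + 1),
          (pairCoeff (e p) (e q) t : 𝕜) * monomialSymm (robinHood e p q t) w else 0 := by
  have hquad : ∀ σ j k, pairTerm e w σ j k + pairTerm e w σ k j
      + pairTerm e w (σ * Equiv.swap j k) j k + pairTerm e w (σ * Equiv.swap j k) k j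
      = if σ j ≠ σ k then ∑ t ∈ range (max (e (σ j)) (e (σ k)) - min (e (σ j)) (e (σ k)) + 1),
          (pairCoeff (e (σ j)) (e (σ k)) t : 𝕜) * monomial (robinHood e (σ j) (σ k) t ∘ σ) w
        else 0 := fun σ j k => by
    by_cases hjk : j = k
    · subst hjk
      simp [pairTerm] -- `w j / (w j - w j) = 0`
    · rw [if_pos (σ.injective.ne hjk), pairTerm_symmetrized e σ hjk (hw.ne hjk)]
  rw [← Nat.cast_ofNat, ← nsmul_eq_mul, sum_perm_symmetrize]
  simp_rw [hquad]
  rw [sum_perm_sum_sum_apply (fun p q σ => if p ≠ q then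
    ∑ t ∈ range (max (e p) (e q) - min (e p) (e q) + 1),
      (pairCoeff (e p) (e q) t : 𝕜) * monomial (robinHood e p q t ∘ σ) w else 0)]
  refine sum_congr rfl fun p _ => sum_congr rfl fun q _ => ?_
  rw [sum_ite_irrel, sum_comm, sum_const_zero]
  simp_rw [← mul_sum]
  rfl

def sutherland (lam : ℝ) (g : (Fin N → ℂ) → ℂ) (w : Fin N → ℂ) : ℂ :=
  (1 / (2 * (lam : ℂ))) * (∑ j, w j ^ 2 * partialDeriv (partialDeriv g j) j w)
    + ∑ j, ∑ k, if j ≠ k then (w j ^ 2 / (w j - w k)) * partialDeriv g j w else 0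

theorem sutherland_monomialSymm (lam : ℝ) (e : Fin N → ℕ) {w : Fin N → ℂ} (hw : Injective w) :
    sutherland lam (monomialSymm e) w
      = 1 / (2 * (lam : ℂ)) * ((∑ j, e j * (e j - 1) : ℕ) : ℂ) * monomialSymm e w
        + 1 / 4 * ∑ p, ∑ q, if p ≠ q then ∑ t ∈ range (max (e p) (e q) - min (e p) (e q) + 1),
            (pairCoeff (e p) (e q) t : ℂ) * monomialSymm (robinHood e p q t) w else 0 := by
  rw [sutherland, sum_sq_mul_partialDeriv_partialDeriv_monomialSymm,
    sum_sum_div_mul_partialDeriv_monomialSymm, ← four_mul_sum_pairTerm e hw]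
  ring

def sutherlandCoeffs (lam : ℝ) (n : Fin N → ℕ) : (Fin N → ℕ) →₀ ℂ :=
  Finsupp.single n (1 / (2 * (lam : ℂ)) * ((∑ j, n j * (n j - 1) : ℕ) : ℂ))
    + ∑ p, ∑ q, if p ≠ q then ∑ t ∈ range (max (n p) (n q) - min (n p) (n q) + 1),
        Finsupp.single (robinHood n p q t ∘ antitoneSort (robinHood n p q t))
          ((pairCoeff (n p) (n q) t : ℂ) / 4) else 0

lemma finsum_sutherlandCoeffs_mul (lam : ℝ) (n : Fin N → ℕ) {w : Fin N → ℂ}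
    (hw : Injective w) :
    ∑ᶠ m, sutherlandCoeffs lam n m * monomialSymm m w = sutherland lam (monomialSymm n) w := by
  rw [finsum_eq_sum_of_support_subset _ (s := (sutherlandCoeffs lam n).support)
    fun m hm => Finsupp.mem_support_iff.mpr (left_ne_zero_of_mul hm)]
  change Finsupp.linearCombination ℂ (fun m => monomialSymm m w) (sutherlandCoeffs lam n) = _
  simp only [sutherlandCoeffs, map_add, map_sum, apply_ite, map_zero,
    Finsupp.linearCombination_single, smul_eq_mul, monomialSymm_comp_perm,
    sutherland_monomialSymm lam n hw, mul_sum, mul_zero]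
  ring_nf

lemma mem_support_sutherlandCoeffs {lam : ℝ} {n m : Fin N → ℕ}
    (hm : m ∈ (sutherlandCoeffs lam n).support) :
    m = n ∨ ∃ p q t, p ≠ q ∧ t ≤ max (n p) (n q) - min (n p) (n q)
      ∧ m = robinHood n p q t ∘ antitoneSort (robinHood n p q t) := by
  by_contra! h
  refine Finsupp.mem_support_iff.mp hm ?_
  rw [sutherlandCoeffs, Finsupp.add_apply, Finsupp.single_eq_of_ne h.1, zero_add,
    Finsupp.finsetSum_apply]
  refine sum_eq_zero fun p _ => ?_
  rw [Finsupp.finsetSum_apply]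
  refine sum_eq_zero fun q _ => ?_
  split_ifs with hpq
  · rw [Finsupp.finsetSum_apply]
    refine sum_eq_zero fun t ht => Finsupp.single_eq_of_ne (h.2 p q t hpq ?_)
    exact Nat.lt_succ_iff.mp (mem_range.mp ht)
  · rfl

end

end Sutherland

theorem stmt_11_general (N : ℕ) (lam : ℝ)
    (n : Fin N → ℕ) (hn : ∀ j k : Fin N, j ≤ k → n k ≤ n j) :
    let M : (Fin N → ℕ) → (Fin N → ℂ) → ℂ := fun m w =>
      ∑ σ : Equiv.Perm (Fin N), ∏ j : Fin N, w j ^ (m (σ j))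
    let pd : ((Fin N → ℂ) → ℂ) → Fin N → (Fin N → ℂ) → ℂ :=
      fun g j w => deriv (fun s => g (Function.update w j s)) (w j)
    let D : ((Fin N → ℂ) → ℂ) → (Fin N → ℂ) → ℂ := fun g w =>
      (1 / (2 * (lam : ℂ))) * (∑ j : Fin N, (w j) ^ 2 * pd (pd g j) j w)
        + ∑ j : Fin N, ∑ k : Fin N,
            if j ≠ k then ((w j) ^ 2 / (w j - w k)) * pd g j w else 0
    ∃ b : (Fin N → ℕ) → ℂ,
      (Function.support b).Finite ∧
      (∀ m : Fin N → ℕ, b m ≠ 0 →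
        (∀ j k : Fin N, j ≤ k → m k ≤ m j) ∧
        (∑ j : Fin N, m j = ∑ j : Fin N, n j) ∧
        (∀ j : Fin N, (∑ k ∈ Finset.univ.filter (fun k => k ≤ j), m k)
            ≤ ∑ k ∈ Finset.univ.filter (fun k => k ≤ j), n k)) ∧
      ∀ z : Fin N → ℂ, Function.Injective z →
        D (M n) z = ∑ᶠ m : Fin N → ℕ, b m * M m z := by
  intro M pd D
  refine ⟨Sutherland.sutherlandCoeffs lam n, (Sutherland.sutherlandCoeffs lam n).hasFiniteSupport,
    fun m hm => ?_, fun z hz => (Sutherland.finsum_sutherlandCoeffs_mul lam n hz).symm⟩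
  rcases Sutherland.mem_support_sutherlandCoeffs (Finsupp.mem_support_iff.mpr hm)
    with rfl | ⟨p, q, t, hpq, ht, rfl⟩
  · exact ⟨hn, rfl, fun j => le_rfl⟩
  · exact ⟨Sutherland.antitone_comp_antitoneSort _,
      (Equiv.sum_comp _ _).trans (Sutherland.sum_robinHood n t hpq ht),
      Sutherland.sum_prefix_comp_perm_le (Sutherland.sum_robinHood_le_sum_prefix n t hn hpq ht) _⟩

/-- Triangularity of `D` on the monomial symmetric functions: for every partition `n`,
`D M_n = ∑_{m ≤ n} b_{n,m} M_m` for some finitely supported coefficients `b`, where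
`M_m(z) = ∑_{σ ∈ S_N} ∏_j z_j^{m_{σ(j)}}` and `m ≤ n` is the dominance order. -/
theorem stmt_11 (N : ℕ) (hN : 2 ≤ N) (lam : ℝ) (hlam : 0 < lam)
    (n : Fin N → ℕ) (hn : ∀ j k : Fin N, j ≤ k → n k ≤ n j) :
    let M : (Fin N → ℕ) → (Fin N → ℂ) → ℂ := fun m w =>
      ∑ σ : Equiv.Perm (Fin N), ∏ j : Fin N, w j ^ (m (σ j))
    let pd : ((Fin N → ℂ) → ℂ) → Fin N → (Fin N → ℂ) → ℂ :=
      fun g j w => deriv (fun s => g (Function.update w j s)) (w j)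
    let D : ((Fin N → ℂ) → ℂ) → (Fin N → ℂ) → ℂ := fun g w =>
      (1 / (2 * (lam : ℂ))) * (∑ j : Fin N, (w j) ^ 2 * pd (pd g j) j w)
        + ∑ j : Fin N, ∑ k : Fin N,
            if j ≠ k then ((w j) ^ 2 / (w j - w k)) * pd g j w else 0
    ∃ b : (Fin N → ℕ) → ℂ,
      (Function.support b).Finite ∧
      (∀ m : Fin N → ℕ, b m ≠ 0 →
        (∀ j k : Fin N, j ≤ k → m k ≤ m j) ∧
        (∑ j : Fin N, m j = ∑ j : Fin N, n j) ∧
        (∀ j : Fin N, (∑ k ∈ Finset.univ.filter (fun k => k ≤ j), m k)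
            ≤ ∑ k ∈ Finset.univ.filter (fun k => k ≤ j), n k)) ∧
      ∀ z : Fin N → ℂ, Function.Injective z →
        D (M n) z = ∑ᶠ m : Fin N → ℕ, b m * M m z :=
  stmt_11_general N lam n hn
end

section
/- For 0 < q < 1 and complex y with 0 < Im(y) < 2·(-log q), the series -∑_{ν=1}^∞ (ν/(1-q^{2ν}))e^{iνy} - ∑_{ν=1}^∞ (ν q^{2ν}/(1-q^{2ν}))e^{-iνy} converges absolutely and equals ∑_{m∈ℤ} 1/(4 sin²((y + imβ)/2)), where β = -2 log q. -/
/-!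
For `Im z > 0`, `1 / (4 sin²(z/2)) = -X / (1 - X)²` with `X = e^{iz}`, which is `-∑ n Xⁿ`.
For a lattice `y + ℤτ` with `0 < Im y < Im τ`, put `t = e^{iτ}`: for `m ≥ 0` the point has
`X = e^{iy} tᵐ`, and for `m < 0` the evenness of `sin²` replaces it by `(τ - y) + (-m-1)τ`, with
`X = e^{i(τ-y)} t^{-m-1}`. Both halves are instances of the Lambert series identity
`∑ₘ x tᵐ / (1 - x tᵐ)² = ∑ₙ n xⁿ / (1 - tⁿ)` (`‖x‖, ‖t‖ < 1`), obtained by summing the absolutely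
convergent double series `∑ₘₙ n (x tᵐ)ⁿ` in both orders. The theorem is the case `τ = iβ`,
where `t = q²`.
-/

open Complex

section Lambert

variable {𝕜 : Type*} [NormedField 𝕜]

theorem hasSum_succ_mul_pow_succ {r : 𝕜} (hr : ‖r‖ < 1) :
    HasSum (fun n : ℕ => ((n : 𝕜) + 1) * r ^ (n + 1)) (r / (1 - r) ^ 2) := by
  have h := (hasSum_nat_add_iff' (f := fun n : ℕ => (n : 𝕜) * r ^ n) 1).mpr
    (hasSum_coe_mul_geometric_of_norm_lt_one hr)
  simpa using h

variable [CompleteSpace 𝕜]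

theorem summable_lambert_family {x t : 𝕜} (hx : ‖x‖ < 1) (ht : ‖t‖ < 1) :
    Summable fun p : ℕ × ℕ => ((p.2 : 𝕜) + 1) * (x * t ^ p.1) ^ (p.2 + 1) := by
  have hx' : ‖‖x‖‖ < 1 := by rwa [norm_norm]
  have hprod : Summable fun p : ℕ × ℕ =>
      ‖t‖ ^ p.1 * ((((p.2 : ℝ) + 1) * ‖x‖ ^ (p.2 + 1)) * ‖(1 : 𝕜)‖) :=
    (summable_geometric_of_lt_one (norm_nonneg t) ht).mul_of_nonneg
      ((hasSum_succ_mul_pow_succ hx').summable.mul_right ‖(1 : 𝕜)‖)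
      (fun _ => by positivity) (fun _ => by positivity)
  refine hprod.of_norm_bounded fun ⟨m, ν⟩ => ?_
  have hcast : ‖(ν : 𝕜) + 1‖ ≤ ((ν : ℝ) + 1) * ‖(1 : 𝕜)‖ := by
    exact_mod_cast Nat.norm_cast_le (α := 𝕜) (ν + 1)
  have hpow : ‖t‖ ^ (m * (ν + 1)) ≤ ‖t‖ ^ m :=
    pow_le_pow_of_le_one (norm_nonneg t) ht.le (Nat.le_mul_of_pos_right m ν.succ_pos)
  calc ‖((ν : 𝕜) + 1) * (x * t ^ m) ^ (ν + 1)‖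
      = ‖(ν : 𝕜) + 1‖ * ‖x‖ ^ (ν + 1) * ‖t‖ ^ (m * (ν + 1)) := by
        rw [norm_mul, mul_pow, norm_mul, norm_pow, norm_pow, norm_pow, ← pow_mul, mul_assoc]
    _ ≤ ((ν : ℝ) + 1) * ‖(1 : 𝕜)‖ * ‖x‖ ^ (ν + 1) * ‖t‖ ^ m := by gcongr
    _ = _ := by ring

theorem exists_hasSum_lambert {x t : 𝕜} (hx : ‖x‖ < 1) (ht : ‖t‖ < 1) :
    ∃ V : 𝕜, HasSum (fun m : ℕ => x * t ^ m / (1 - x * t ^ m) ^ 2) V ∧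
      HasSum (fun ν : ℕ => ((ν : 𝕜) + 1) * x ^ (ν + 1) / (1 - t ^ (ν + 1))) V := by
  obtain ⟨V, hV⟩ := summable_lambert_family hx ht
  have hfiber_m (m : ℕ) :
      HasSum (fun ν : ℕ => ((ν : 𝕜) + 1) * (x * t ^ m) ^ (ν + 1))
        (x * t ^ m / (1 - x * t ^ m) ^ 2) := by
    refine hasSum_succ_mul_pow_succ ?_
    rw [norm_mul, norm_pow]
    exact mul_lt_one_of_nonneg_of_lt_one_left (norm_nonneg x) hx
      (pow_le_one₀ (norm_nonneg t) ht.le)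
  have hfiber_ν (ν : ℕ) :
      HasSum (fun m : ℕ => ((ν : 𝕜) + 1) * (x * t ^ m) ^ (ν + 1))
        (((ν : 𝕜) + 1) * x ^ (ν + 1) / (1 - t ^ (ν + 1))) := by
    have htν : ‖t ^ (ν + 1)‖ < 1 := by
      rw [norm_pow]; exact pow_lt_one₀ (norm_nonneg t) ht ν.succ_ne_zero
    rw [div_eq_mul_inv]
    exact ((hasSum_geometric_of_norm_lt_one htν).mul_left _).congr_fun fun m => by ring
  exact ⟨V, hV.prod_fiberwise hfiber_m,
    ((Equiv.prodComm ℕ ℕ).hasSum_iff.mpr hV).prod_fiberwise hfiber_ν⟩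

end Lambert

theorem four_mul_sin_sq_half (z : ℂ) :
    4 * sin (z / 2) ^ 2 = -(1 - exp (I * z)) ^ 2 / exp (I * z) := by
  have hu := exp_ne_zero (I * z / 2)
  have hx : exp (I * z) = exp (I * z / 2) ^ 2 := by rw [← exp_nat_mul]; ring_nf
  rw [sin, hx, show -(z / 2) * I = -(I * z / 2) by ring, show z / 2 * I = I * z / 2 by ring,
    exp_neg]
  field_simp
  ring_nf
  rw [I_sq]
  ring

theorem one_div_four_mul_sin_sq_half (z : ℂ) :
    1 / (4 * sin (z / 2) ^ 2) = -(exp (I * z) / (1 - exp (I * z)) ^ 2) := by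
  rw [four_mul_sin_sq_half, one_div_div, div_neg]

theorem norm_exp_I_mul_lt_one {w : ℂ} (hw : 0 < w.im) : ‖exp (I * w)‖ < 1 := by
  rw [norm_exp, Real.exp_lt_one_iff]
  simpa using hw

theorem exp_I_mul_add_nat_mul (w τ : ℂ) (n : ℕ) :
    exp (I * (w + n * τ)) = exp (I * w) * exp (I * τ) ^ n := by
  rw [← exp_nat_mul, ← exp_add]
  ring_nf

theorem exists_hasSum_lattice_one_div_four_mul_sin_sq {y τ : ℂ} (hy : 0 < y.im)
    (hyτ : y.im < τ.im) :
    ∃ V : ℂ,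
      HasSum (fun m : ℤ => 1 / (4 * sin ((y + m * τ) / 2) ^ 2)) V ∧
      HasSum (fun ν : ℕ =>
        -(((ν : ℂ) + 1) / (1 - exp (I * τ) ^ (ν + 1)) * exp (I * ((ν : ℂ) + 1) * y))
          - ((ν : ℂ) + 1) * exp (I * τ) ^ (ν + 1) / (1 - exp (I * τ) ^ (ν + 1))
            * exp (-I * ((ν : ℂ) + 1) * y)) V := by
  set t := exp (I * τ)
  set x := exp (I * y)
  set x' := exp (I * (τ - y))
  have ht : ‖t‖ < 1 := norm_exp_I_mul_lt_one (hy.trans hyτ)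
  have hx : ‖x‖ < 1 := norm_exp_I_mul_lt_one hy
  have hx' : ‖x'‖ < 1 := norm_exp_I_mul_lt_one (by rw [sub_im]; linarith)
  obtain ⟨V₁, hm₁, hν₁⟩ := exists_hasSum_lambert hx ht
  obtain ⟨V₂, hm₂, hν₂⟩ := exists_hasSum_lambert hx' ht
  refine ⟨-V₁ + -V₂, HasSum.of_nat_of_neg_add_one (hm₁.neg.congr_fun fun n => ?_)
    (hm₂.neg.congr_fun fun n => ?_), (hν₁.neg.add hν₂.neg).congr_fun fun ν => ?_⟩
  · rw [one_div_four_mul_sin_sq_half, Int.cast_natCast, exp_I_mul_add_nat_mul]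
  · rw [← neg_neg (y + _), neg_div, sin_neg, neg_sq, one_div_four_mul_sin_sq_half,
      show -(y + ((-(n + 1 : ℤ) : ℤ) : ℂ) * τ) = τ - y + n * τ by push_cast; ring,
      exp_I_mul_add_nat_mul]
  · have hx_pow : x ^ (ν + 1) = exp (I * ((ν : ℂ) + 1) * y) := by
      rw [← exp_nat_mul]
      push_cast
      ring_nf
    have hx'_pow : x' ^ (ν + 1) = t ^ (ν + 1) * exp (-I * ((ν : ℂ) + 1) * y) := by
      rw [← exp_nat_mul, ← exp_nat_mul, ← exp_add]
      push_cast
      ring_nf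
    rw [hx_pow, hx'_pow]
    ring

theorem stmt_16_general (q : ℝ) (hq0 : 0 < q) (y : ℂ)
    (hy1 : 0 < y.im) (hy2 : y.im < 2 * (-Real.log q)) :
    ∃ V : ℂ,
      HasSum (fun m : ℤ =>
        1 / (4 * Complex.sin ((y + Complex.I * (m : ℂ) * ((-2 * Real.log q : ℝ) : ℂ)) / 2) ^ 2))
        V ∧
      HasSum (fun ν : ℕ =>
        -((((ν : ℂ) + 1) / (1 - (q : ℂ) ^ (2 * (ν + 1))))
            * Complex.exp (Complex.I * ((ν : ℂ) + 1) * y))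
          - (((ν : ℂ) + 1) * (q : ℂ) ^ (2 * (ν + 1)) / (1 - (q : ℂ) ^ (2 * (ν + 1))))
            * Complex.exp (-Complex.I * ((ν : ℂ) + 1) * y))
        V := by
  set β : ℂ := ((-2 * Real.log q : ℝ) : ℂ)
  obtain ⟨V, hm, hν⟩ :=
    exists_hasSum_lattice_one_div_four_mul_sin_sq (τ := I * β) hy1 (by simp [β]; linarith)
  have hperiod : exp (I * (I * β)) = (q : ℂ) ^ 2 := by
    rw [show I * (I * β) = ((Real.log (q ^ 2) : ℝ) : ℂ) by
      rw [Real.log_pow, ← mul_assoc, I_mul_I]; push_cast [β]; ring,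
      ← ofReal_exp, Real.exp_log (by positivity)]
    push_cast
    rfl
  refine ⟨V, hm.congr_fun fun m => by ring_nf, hν.congr_fun fun ν => ?_⟩
  rw [hperiod, ← pow_mul]

/-- For `0 < q < 1`, `β = -2 log q`, and complex `y` with `0 < Im y < β`, the series
`-∑_{ν≥1} (ν/(1-q^{2ν})) e^{iνy} - ∑_{ν≥1} (ν q^{2ν}/(1-q^{2ν})) e^{-iνy}` converges and
equals the elliptic potential `∑_{m∈ℤ} 1/(4 sin²((y + imβ)/2))` (which also converges). -/
theorem stmt_16 (q : ℝ) (hq0 : 0 < q) (hq1 : q < 1) (y : ℂ)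
    (hy1 : 0 < y.im) (hy2 : y.im < 2 * (-Real.log q)) :
    ∃ V : ℂ,
      HasSum (fun m : ℤ =>
        1 / (4 * Complex.sin ((y + Complex.I * (m : ℂ) * ((-2 * Real.log q : ℝ) : ℂ)) / 2) ^ 2))
        V ∧
      HasSum (fun ν : ℕ =>
        -((((ν : ℂ) + 1) / (1 - (q : ℂ) ^ (2 * (ν + 1))))
            * Complex.exp (Complex.I * ((ν : ℂ) + 1) * y))
          - (((ν : ℂ) + 1) * (q : ℂ) ^ (2 * (ν + 1)) / (1 - (q : ℂ) ^ (2 * (ν + 1))))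
            * Complex.exp (-Complex.I * ((ν : ℂ) + 1) * y))
        V :=
  stmt_16_general q hq0 y hy1 hy2
end
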